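/- arXiv:0711.3924 — 7 statements merged into one kernel-verified Lean document; each statement's English description precedes it below -/
import Mathlib

section
/- Let (Y_n)_{n≥0} be a stationary Markov chain of bounded real random variables with transition kernel K and invariant probability measure μ, and let u_n = sup_{g ∈ Λ₁} ‖K^n(g) − μ(g)‖_{∞,μ}. Let f : ℝ → ℝ satisfy |f(x) − f(y)| ≤ c(|x − y|) for all x, y, where c : [0,∞) → [0,∞) is concave and nondecreasing. Then for every n ≥ 1, ‖K^n(f) − μ(f)‖_{∞,μ} ≤ c(u_n). -/
open MeasureTheory Filter
open scoped ENNReal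

/-- The action of the `n`-fold iterate of a Markov kernel `K` on a function:
`K^0 f = f` and `K^{n+1} f (x) = ∫ K^n f (y) K(x, dy)`. -/
noncomputable def kIter (K : ProbabilityTheory.Kernel ℝ ℝ) : ℕ → (ℝ → ℝ) → ℝ → ℝ
  | 0, f => f
  | n + 1, f => fun x => ∫ y, kIter K n f y ∂(K x)

/-- `u_n = sup_{g 1-Lipschitz} ‖K^n g − μ(g)‖_{∞,μ}`. -/
noncomputable def uSeq (K : ProbabilityTheory.Kernel ℝ ℝ) (μ : Measure ℝ) (n : ℕ) : ℝ≥0∞ :=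
  ⨆ g : {g : ℝ → ℝ // LipschitzWith 1 g},
    eLpNorm (fun x => kIter K n g.1 x - ∫ y, g.1 y ∂μ) ⊤ μ

/-!
Write `u = u_n`. By invariance of `μ`, changing `f` off the support of `μ` changes `K^n f` only on a
`μ`-null set, so `f` may be truncated to a bounded function; then `K^n f x` is a genuine integral
against the probability measure `K^n(x, ·)`.

If `u = 0`, testing against Lipschitz approximations of the indicators of half-lines shows that
`K^n(x, ·) = μ` for `μ`-a.e. `x`. If `u > 0`, concavity gives a supergradient `s ≥ 0` of `c` at `u`,
i.e. `c t ≤ c u + s (t - u)`, so `f` is `s`-Lipschitz up to the additive error `D = c u - s u`.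
The inf-convolution `g x = ⨅ y, f y + s |x - y|` is then `s`-Lipschitz with `f - D ≤ g ≤ f`, whence
`|K^n f - μ f| ≤ D + |K^n g - μ g| ≤ D + s u = c u`.
-/

open ProbabilityTheory Set
open scoped NNReal

namespace ProbabilityTheory.Kernel

variable {α : Type*} [MeasurableSpace α]

noncomputable def pow (K : Kernel α α) : ℕ → Kernel α α
  | 0 => Kernel.id
  | n + 1 => pow K n ∘ₖ K

instance isMarkovKernel_pow (K : Kernel α α) [IsMarkovKernel K] (n : ℕ) :
    IsMarkovKernel (K.pow n) := by
  induction n with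
  | zero => exact inferInstanceAs (IsMarkovKernel Kernel.id)
  | succ n _ => exact inferInstanceAs (IsMarkovKernel (K.pow n ∘ₖ K))

end ProbabilityTheory.Kernel

theorem integrable_of_abs_le {α : Type*} [MeasurableSpace α] {ν : Measure α} [IsFiniteMeasure ν]
    {h : α → ℝ} (hh : Measurable h) {C : ℝ} (hC : ∀ z, |h z| ≤ C) : Integrable h ν :=
  .of_bound hh.aestronglyMeasurable C (.of_forall hC)

theorem integral_sub_integral_mem_Icc {α : Type*} [MeasurableSpace α] {ν : Measure α}
    [IsProbabilityMeasure ν] {f g : α → ℝ} (hf : Integrable f ν) (hg : Integrable g ν) {D : ℝ}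
    (hgf : ∀ x, g x ≤ f x) (hfg : ∀ x, f x - D ≤ g x) :
    ∫ x, f x ∂ν - ∫ x, g x ∂ν ∈ Icc 0 D := by
  rw [← integral_sub hf hg]
  refine ⟨integral_nonneg fun x => sub_nonneg.2 (hgf x), ?_⟩
  calc ∫ x, f x - g x ∂ν ≤ ∫ _, D ∂ν :=
        integral_mono (hf.sub hg) (integrable_const D) fun x => by linarith [hfg x]
    _ = D := by simp

theorem ae_abs_le_toReal_of_eLpNorm_top_le {α : Type*} [MeasurableSpace α] {μ : Measure α}
    {h : α → ℝ} {b : ℝ≥0∞} (hb : b ≠ ⊤) (hle : eLpNorm h ⊤ μ ≤ b) :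
    ∀ᵐ x ∂μ, |h x| ≤ b.toReal := by
  rw [eLpNorm_exponent_top] at hle
  filter_upwards [ae_le_eLpNormEssSup (f := h)] with x hx
  simpa [← Real.norm_eq_abs, toReal_enorm] using ENNReal.toReal_mono hb (hx.trans hle)

theorem ConcaveOn.exists_le_add_mul_sub_of_monotoneOn {c : ℝ → ℝ} (hconc : ConcaveOn ℝ (Ici 0) c)
    (hmono : MonotoneOn c (Ici 0)) {u : ℝ} (hu : 0 < u) :
    ∃ s : ℝ≥0, ∀ t, 0 ≤ t → c t ≤ c u + s * (t - u) := by
  have hslope : ∀ t t', 0 ≤ t → t < u → u < t' →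
      (c t' - c u) / (t' - u) ≤ (c u - c t) / (u - t) := fun t t' ht htu hut' =>
    hconc.slope_anti_adjacent ht (mem_Ici.2 (by linarith)) htu hut'
  set s := ⨆ t' : Ioi u, (c t' - c u) / (t' - u)
  have hbdd : BddAbove (range fun t' : Ioi u => (c t' - c u) / (t' - u)) :=
    ⟨(c u - c 0) / (u - 0), by rintro _ ⟨t', rfl⟩; exact hslope 0 t' le_rfl hu t'.2⟩
  have hright : ∀ t', u < t' → (c t' - c u) / (t' - u) ≤ s := fun t' ht' =>
    le_ciSup hbdd (⟨t', ht'⟩ : Ioi u)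
  have hleft : ∀ t, 0 ≤ t → t < u → s ≤ (c u - c t) / (u - t) := fun t ht htu =>
    ciSup_le fun t' => hslope t t' ht htu t'.2
  have hs : 0 ≤ s := by
    refine le_trans (div_nonneg (sub_nonneg.2 ?_) (by linarith)) (hright (u + 1) (by linarith))
    exact hmono (mem_Ici.2 hu.le) (mem_Ici.2 (by linarith)) (by linarith)
  refine ⟨s.toNNReal, fun t ht => ?_⟩
  rw [Real.coe_toNNReal _ hs]
  rcases lt_trichotomy t u with htu | rfl | hut
  · have := hleft t ht htu
    rw [le_div_iff₀ (sub_pos.2 htu)] at this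
    nlinarith
  · simp
  · have := hright t hut
    rw [div_le_iff₀ (sub_pos.2 hut)] at this
    nlinarith

theorem exists_lipschitzWith_le_of_sub_le_add_mul_dist {X : Type*} [PseudoMetricSpace X]
    {f : X → ℝ} {s : ℝ≥0} {D : ℝ} (hf : ∀ x y, f x - f y ≤ D + s * dist x y) :
    ∃ g : X → ℝ, LipschitzWith s g ∧ ∀ x, g x ≤ f x ∧ f x - D ≤ g x := by
  have hbdd : ∀ x, BddBelow (range fun y => f y + s * dist x y) := fun x =>
    ⟨f x - D, by rintro _ ⟨y, rfl⟩; linarith [hf x y]⟩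
  refine ⟨fun x => ⨅ y, f y + s * dist x y, LipschitzWith.of_le_add_mul s fun x x' => ?_,
    fun x => ⟨?_, ?_⟩⟩
  · have : Nonempty X := ⟨x⟩
    rw [← sub_le_iff_le_add]
    refine le_ciInf fun y => ?_
    have hx := ciInf_le (hbdd x) y
    have htri := mul_le_mul_of_nonneg_left (dist_triangle x x' y) s.coe_nonneg
    rw [mul_add] at htri
    linarith
  · simpa using ciInf_le (hbdd x) x
  · have : Nonempty X := ⟨x⟩
    exact le_ciInf fun y => by linarith [hf x y]

theorem exists_bounded_modulus_eqOn_abs_le {f c : ℝ → ℝ} (hf_meas : Measurable f)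
    (hcmono : MonotoneOn c (Ici 0)) (hf : ∀ x y, |f x - f y| ≤ c |x - y|) (M : ℝ) :
    ∃ f' : ℝ → ℝ, Measurable f' ∧ (∃ B, ∀ x, |f' x| ≤ B) ∧
      (∀ x y, |f' x - f' y| ≤ c |x - y|) ∧ ∀ x, |x| ≤ M → f' x = f x := by
  set B := |f 0| + |c (|M|)|
  have hclamp : LipschitzWith 1 fun p : ℝ => max (-B) (min B p) :=
    (LipschitzWith.id.const_min B).const_max (-B)
  have hB : -B ≤ B := neg_le_self (by positivity)
  refine ⟨fun x => max (-B) (min B (f x)), hclamp.continuous.measurable.comp hf_meas,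
    ⟨B, fun x => abs_le.2 ⟨le_max_left _ _, max_le hB (min_le_left _ _)⟩⟩, fun x y => ?_,
    fun x hx => ?_⟩
  · have := hclamp.dist_le_mul (f x) (f y)
    rw [NNReal.coe_one, one_mul, Real.dist_eq, Real.dist_eq] at this
    exact this.trans (hf x y)
  · have hfx : |f x| ≤ B :=
      calc |f x| ≤ |f 0| + |f x - f 0| := by simpa using abs_add_le (f 0) (f x - f 0)
        _ ≤ |f 0| + c |M| := by
          gcongr
          refine (hf x 0).trans (hcmono (mem_Ici.2 (abs_nonneg _)) (mem_Ici.2 (abs_nonneg M)) ?_)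
          simpa using hx.trans (le_abs_self M)
        _ ≤ B := add_le_add_right (le_abs_self _) _
    rw [abs_le] at hfx
    simp [min_eq_right hfx.2, max_eq_right hfx.1]

section kIter

variable {K : Kernel ℝ ℝ}

theorem kIter_const_mul (a : ℝ) (h : ℝ → ℝ) :
    ∀ n, kIter K n (fun x => a * h x) = fun x => a * kIter K n h x
  | 0 => rfl
  | n + 1 => funext fun x => by simp only [kIter, kIter_const_mul a h n, integral_const_mul]

theorem kIter_eq_integral_pow [IsMarkovKernel K] {h : ℝ → ℝ} (hh : Measurable h) {C : ℝ}
    (hC : ∀ z, |h z| ≤ C) : ∀ n x, kIter K n h x = ∫ z, h z ∂(K.pow n x)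
  | 0, x => by simp [kIter, Kernel.pow, Kernel.id_apply]
  | n + 1, x => by
    rw [Kernel.pow, Kernel.integral_comp (integrable_of_abs_le hh hC)]
    exact integral_congr_ae (.of_forall (kIter_eq_integral_pow hh hC n))

theorem kIter_congr_ae {μ : Measure ℝ} (hinv : μ.bind (fun x => K x) = μ) {h h' : ℝ → ℝ}
    (hh : h =ᵐ[μ] h') : ∀ n, kIter K n h =ᵐ[μ] kIter K n h'
  | 0 => hh
  | n + 1 => by
    have hn : ∀ᵐ y ∂(K ∘ₘ μ), kIter K n h y = kIter K n h' y := by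
      rw [hinv]; exact kIter_congr_ae hinv hh n
    filter_upwards [Measure.ae_ae_of_ae_comp hn] with x hx
    exact integral_congr_ae hx

end kIter

theorem MeasureTheory.Measure.ext_of_integral_thickenedIndicator_Iic_eq {ν ρ : Measure ℝ}
    [IsProbabilityMeasure ν] [IsProbabilityMeasure ρ]
    (h : ∀ (t : ℚ) (k : ℕ),
      ∫ x, (thickenedIndicator (Nat.one_div_pos_of_nat (n := k)) (Iic (t : ℝ)) x : ℝ) ∂ν =
        ∫ x, (thickenedIndicator (Nat.one_div_pos_of_nat (n := k)) (Iic (t : ℝ)) x : ℝ) ∂ρ) :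
    ν = ρ := by
  refine ext_of_generate_finite _
    (BorelSpace.measurable_eq.trans Real.borel_eq_generateFrom_Iic_rat) Real.isPiSystem_Iic_rat ?_
    (by simp)
  simp only [mem_iUnion, mem_singleton_iff]
  rintro _ ⟨t, rfl⟩
  have hlim (η : Measure ℝ) [IsProbabilityMeasure η] :=
    tendsto_integral_thickenedIndicator_of_isClosed η (isClosed_Iic (a := (t : ℝ)))
      (fun _ => Nat.one_div_pos_of_nat) tendsto_one_div_add_atTop_nhds_zero_nat
  rw [← measureReal_eq_measureReal_iff]
  exact tendsto_nhds_unique ((hlim ν).congr (h t)) (hlim ρ)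

section uSeq

variable {K : Kernel ℝ ℝ} [IsMarkovKernel K] {μ : Measure ℝ} [IsProbabilityMeasure μ] {n : ℕ}

theorem ae_abs_kIter_sub_integral_le_of_lipschitzWith (hu : uSeq K μ n ≠ ⊤) {s : ℝ≥0}
    {g : ℝ → ℝ} (hg : LipschitzWith s g) :
    ∀ᵐ x ∂μ, |kIter K n g x - ∫ y, g y ∂μ| ≤ s * (uSeq K μ n).toReal := by
  rcases eq_or_ne s 0 with rfl | hs
  · have hconst : g = fun _ => g 0 := funext fun x => by
      simpa [dist_le_zero] using hg.dist_le_mul x 0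
    refine .of_forall fun x => ?_
    rw [hconst, kIter_eq_integral_pow measurable_const (fun _ => le_rfl) n x]
    simp
  have hs' : (0 : ℝ) < s := by positivity
  have hg₁ : LipschitzWith 1 fun x => (s : ℝ)⁻¹ * g x := by
    refine LipschitzWith.of_dist_le_mul fun x y => ?_
    rw [Real.dist_eq, ← mul_sub, abs_mul, abs_inv, NNReal.abs_eq, NNReal.coe_one, one_mul,
      inv_mul_le_iff₀ hs', ← Real.dist_eq]
    exact hg.dist_le_mul x y
  have hle : eLpNorm (fun x => kIter K n (fun x => (s : ℝ)⁻¹ * g x) x -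
      ∫ y, (s : ℝ)⁻¹ * g y ∂μ) ⊤ μ ≤ uSeq K μ n :=
    le_iSup (fun g : {g : ℝ → ℝ // LipschitzWith 1 g} =>
      eLpNorm (fun x => kIter K n g.1 x - ∫ y, g.1 y ∂μ) ⊤ μ) ⟨_, hg₁⟩
  filter_upwards [ae_abs_le_toReal_of_eLpNorm_top_le hu hle] with x hx
  rwa [kIter_const_mul, integral_const_mul, ← mul_sub, abs_mul, abs_inv, NNReal.abs_eq,
    inv_mul_le_iff₀ hs'] at hx

theorem ae_pow_eq_of_uSeq_eq_zero (hu : uSeq K μ n = 0) : ∀ᵐ x ∂μ, K.pow n x = μ := by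
  have key : ∀ (t : ℚ) (k : ℕ), ∀ᵐ x ∂μ,
      ∫ z, (thickenedIndicator (Nat.one_div_pos_of_nat (n := k)) (Iic (t : ℝ)) z : ℝ)
          ∂(K.pow n x) =
        ∫ z, (thickenedIndicator (Nat.one_div_pos_of_nat (n := k)) (Iic (t : ℝ)) z : ℝ) ∂μ := by
    intro t k
    set φ := thickenedIndicator (Nat.one_div_pos_of_nat (n := k)) (Iic (t : ℝ))
    have hφ : LipschitzWith _ fun z => (φ z : ℝ) :=
      (LipschitzWith.subtype_val _).comp (lipschitzWith_thickenedIndicator _ _)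
    have hφ_le : ∀ z, |(φ z : ℝ)| ≤ 1 := fun z => by
      simpa using thickenedIndicator_le_one _ _ z
    filter_upwards [ae_abs_kIter_sub_integral_le_of_lipschitzWith (hu ▸ ENNReal.zero_ne_top) hφ]
      with x hx
    rwa [hu, ENNReal.toReal_zero, mul_zero, abs_nonpos_iff, sub_eq_zero,
      kIter_eq_integral_pow (by fun_prop) hφ_le] at hx
  simp_rw [← ae_all_iff] at key
  filter_upwards [key] with x hx
  exact Measure.ext_of_integral_thickenedIndicator_Iic_eq hx

end uSeq

theorem ae_abs_kIter_sub_integral_le_of_modulus {K : Kernel ℝ ℝ} [IsMarkovKernel K]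
    {μ : Measure ℝ} [IsProbabilityMeasure μ] {n : ℕ} (hu : uSeq K μ n ≠ ⊤) {c : ℝ → ℝ}
    (hcmono : MonotoneOn c (Ici 0)) (hcconc : ConcaveOn ℝ (Ici 0) c) (hc0 : 0 ≤ c 0)
    {f : ℝ → ℝ} (hf_meas : Measurable f) {B : ℝ} (hfB : ∀ x, |f x| ≤ B)
    (hf : ∀ x y, |f x - f y| ≤ c |x - y|) :
    ∀ᵐ x ∂μ, |kIter K n f x - ∫ y, f y ∂μ| ≤ c (uSeq K μ n).toReal := by
  rcases eq_or_ne (uSeq K μ n) 0 with hu0 | hu0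
  · filter_upwards [ae_pow_eq_of_uSeq_eq_zero hu0] with x hx
    rw [kIter_eq_integral_pow hf_meas hfB, hx, sub_self, abs_zero, hu0, ENNReal.toReal_zero]
    exact hc0
  set u := (uSeq K μ n).toReal with hu_def
  obtain ⟨s, hsup⟩ :=
    hcconc.exists_le_add_mul_sub_of_monotoneOn hcmono (ENNReal.toReal_pos hu0 hu)
  obtain ⟨g, hg, hgf⟩ := exists_lipschitzWith_le_of_sub_le_add_mul_dist (f := f) (s := s)
    (D := c u - s * u) fun x y =>
      calc f x - f y ≤ c |x - y| := (le_abs_self _).trans (hf x y)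
        _ ≤ c u + s * (|x - y| - u) := hsup _ (abs_nonneg _)
        _ = c u - s * u + s * dist x y := by rw [Real.dist_eq]; ring
  have hgB : ∀ x, |g x| ≤ B + |c u - s * u| := fun x => by
    have hfx := abs_le.1 (hfB x)
    rw [abs_le]
    constructor <;>
      linarith [(hgf x).1, (hgf x).2, le_abs_self (c u - s * u), abs_nonneg (c u - s * u)]
  have hg_meas : Measurable g := hg.continuous.measurable
  filter_upwards [ae_abs_kIter_sub_integral_le_of_lipschitzWith hu hg] with x hx
  rw [kIter_eq_integral_pow hg_meas hgB, ← hu_def] at hx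
  rw [kIter_eq_integral_pow hf_meas hfB]
  have hsandwich (ν : Measure ℝ) [IsProbabilityMeasure ν] :=
    integral_sub_integral_mem_Icc (ν := ν) (integrable_of_abs_le hf_meas hfB)
      (integrable_of_abs_le hg_meas hgB) (fun x => (hgf x).1) (fun x => (hgf x).2)
  have hν := hsandwich (K.pow n x)
  have hμ := hsandwich μ
  rw [abs_le] at hx ⊢
  simp only [mem_Icc] at hν hμ
  constructor <;> linarith

theorem stmt_10_general (K : ProbabilityTheory.Kernel ℝ ℝ) [ProbabilityTheory.IsMarkovKernel K]
    (μ : Measure ℝ) [IsProbabilityMeasure μ]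
    (hinv : μ.bind (fun x => K x) = μ)
    (M : ℝ) (hμM : μ {x | M < |x|} = 0)
    (c : ℝ → ℝ) (hcmono : MonotoneOn c (Set.Ici 0)) (hcconc : ConcaveOn ℝ (Set.Ici 0) c)
    (hc0 : ∀ t, 0 ≤ t → 0 ≤ c t)
    (f : ℝ → ℝ) (hfmeas : Measurable f) (hf : ∀ x y, |f x - f y| ≤ c |x - y|)
    (n : ℕ) (hufin : uSeq K μ n ≠ ⊤) :
    eLpNorm (fun x => kIter K n f x - ∫ y, f y ∂μ) ⊤ μ ≤
      ENNReal.ofReal (c (uSeq K μ n).toReal) := by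
  obtain ⟨f', hf'_meas, ⟨B, hf'B⟩, hf', hf'f⟩ :=
    exists_bounded_modulus_eqOn_abs_le hfmeas hcmono hf M
  have hff' : f =ᵐ[μ] f' := by
    have hM : ∀ᵐ x ∂μ, |x| ≤ M := ae_iff.2 (by simpa only [not_le] using hμM)
    filter_upwards [hM] with x hx using (hf'f x hx).symm
  have hred : (fun x => kIter K n f x - ∫ y, f y ∂μ) =ᵐ[μ]
      fun x => kIter K n f' x - ∫ y, f' y ∂μ := by
    filter_upwards [kIter_congr_ae hinv hff' n] with x hx
    rw [hx, integral_congr_ae hff']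
  rw [eLpNorm_congr_ae hred, eLpNorm_exponent_top]
  exact eLpNormEssSup_le_of_ae_bound <| ae_abs_kIter_sub_integral_le_of_modulus hufin hcmono
    hcconc (hc0 0 le_rfl) hf'_meas hf'B hf'

/-- Lemma `rhoarith`: if `|f(x) − f(y)| ≤ c(|x − y|)` for a concave nondecreasing `c`,
then `‖K^n f − μ(f)‖_{∞,μ} ≤ c(u_n)`. -/
theorem stmt_10 (K : ProbabilityTheory.Kernel ℝ ℝ) [ProbabilityTheory.IsMarkovKernel K]
    (μ : Measure ℝ) [IsProbabilityMeasure μ]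
    (hinv : μ.bind (fun x => K x) = μ)
    (M : ℝ) (hμM : μ {x | M < |x|} = 0)
    (c : ℝ → ℝ) (hcmono : MonotoneOn c (Set.Ici 0)) (hcconc : ConcaveOn ℝ (Set.Ici 0) c)
    (hc0 : ∀ t, 0 ≤ t → 0 ≤ c t)
    (f : ℝ → ℝ) (hfmeas : Measurable f) (hf : ∀ x y, |f x - f y| ≤ c |x - y|)
    (n : ℕ) (hn : 1 ≤ n) (hufin : uSeq K μ n ≠ ⊤) :
    eLpNorm (fun x => kIter K n f x - ∫ y, f y ∂μ) ⊤ μ ≤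
      ENNReal.ofReal (c (uSeq K μ n).toReal) :=
  stmt_10_general K μ hinv M hμM c hcmono hcconc hc0 f hfmeas hf n hufin
end

section
/- Let (Y_n)_{n≥0} be a stationary Markov chain of bounded real random variables with transition kernel K and invariant probability measure μ, let u_n = sup_{g ∈ Λ₁} ‖K^n(g) − μ(g)‖_{∞,μ}, and let f : ℝ → ℝ satisfy |f(x) − f(y)| ≤ c(|x − y|) for a concave nondecreasing c : [0,∞) → [0,∞). If u_n ≤ C ρ^n for some C > 0 and ρ ∈ (0,1), and c(t) ≤ D |log t|^{−γ} for all t ∈ (0,1) for some D > 0 and γ > 0, then ‖K^n(f) − μ(f)‖_{∞,μ} = O(n^{−γ}) as n → ∞; that is, there exists M > 0 with ‖K^n(f) − μ(f)‖_{∞,μ} ≤ M n^{−γ} for all n ≥ 1. -/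
/-!
Truncating `f` outside the support of `μ` makes it bounded without changing `K^n f` `μ`-a.e.,
by invariance of `μ`. Concavity of the modulus `c` gives `c t ≤ c δ + (c δ / δ) t` for every
`δ > 0`, so the inf-convolution of `f` with `(c δ / δ) |·|` is a `(c δ / δ)`-Lipschitz function
within `c δ` of `f`. Hence `‖K^n f - μ f‖ ≤ 2 c δ + (c δ / δ) u_n`, and with `δ = ρ^n` this is at
most `(2 + C) c(ρ^n) ≤ (2 + C) D |log ρ|^{-γ} n^{-γ}`.
-/

open MeasureTheory Filter
open scoped ENNReal

open scoped NNReal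

theorem exists_lipschitzWith_approx_of_le_add_mul {α : Type*} [PseudoMetricSpace α]
    {f : α → ℝ} {B ε : ℝ} {L : ℝ≥0} (hB : ∀ x, B ≤ f x)
    (hf : ∀ x y, f x ≤ f y + ε + L * dist x y) :
    ∃ g : α → ℝ, LipschitzWith L g ∧ ∀ x, f x - ε ≤ g x ∧ g x ≤ f x := by
  let g x := ⨅ y, f y + L * dist x y
  have hbdd x : BddBelow (Set.range fun y => f y + L * dist x y) := by
    refine ⟨B, ?_⟩
    rintro _ ⟨y, rfl⟩
    exact le_add_of_le_of_nonneg (hB y) (by positivity)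
  refine ⟨g, LipschitzWith.of_le_add_mul L fun x x' => ?_, fun x => ⟨?_, ?_⟩⟩
  · have : Nonempty α := ⟨x⟩
    rw [← sub_le_iff_le_add]
    refine le_ciInf fun z => ?_
    rw [sub_le_iff_le_add]
    calc g x ≤ f z + L * dist x z := ciInf_le (hbdd x) z
      _ ≤ f z + L * dist x' z + L * dist x x' := by
        rw [add_assoc, ← mul_add, add_comm (dist x' z)]
        gcongr
        apply dist_triangle
  · have : Nonempty α := ⟨x⟩
    exact le_ciInf fun y => by linarith [hf x y]
  · simpa using ciInf_le (hbdd x) x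

theorem ConcaveOn.le_add_div_mul {c : ℝ → ℝ} (hcmono : MonotoneOn c (Set.Ici 0))
    (hcconc : ConcaveOn ℝ (Set.Ici 0) c) (hc0 : 0 ≤ c 0) {δ t : ℝ} (hδ : 0 < δ) (ht : 0 ≤ t) :
    c t ≤ c δ + c δ / δ * t := by
  have hcδ : 0 ≤ c δ := hc0.trans (hcmono Set.self_mem_Ici (Set.mem_Ici.2 hδ.le) hδ.le)
  rcases le_total t δ with htδ | hδt
  · have := hcmono ht hδ.le htδ
    have : 0 ≤ c δ / δ * t := by positivity
    linarith
  · have ht' : 0 < t := hδ.trans_le hδt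
    have hsecant := hcconc.neg.secant_mono (a := 0) Set.self_mem_Ici (Set.mem_Ici.2 hδ.le)
      (Set.mem_Ici.2 ht) hδ.ne' ht'.ne' hδt
    simp only [Pi.neg_apply, sub_zero] at hsecant
    rw [div_le_div_iff₀ hδ ht'] at hsecant
    rw [div_mul_eq_mul_div, ← sub_le_iff_le_add', le_div_iff₀ hδ]
    nlinarith [mul_nonneg hc0 (sub_nonneg.2 hδt), mul_nonneg hcδ hδ.le]

theorem MeasureTheory.eLpNorm_top_le_of_forall_abs_le {α : Type*} [MeasurableSpace α]
    {μ : Measure α} {f : α → ℝ} {C : ℝ} (hf : ∀ x, |f x| ≤ C) :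
    eLpNorm f ⊤ μ ≤ ENNReal.ofReal C :=
  eLpNorm_exponent_top (f := f) ▸ eLpNormEssSup_le_of_ae_bound (.of_forall hf)

theorem exists_bounded_ae_eq_of_abs_sub_le {μ : Measure ℝ} {M : ℝ}
    (hμM : μ {x | M < |x|} = 0) {c : ℝ → ℝ} (hcmono : MonotoneOn c (Set.Ici 0))
    {f : ℝ → ℝ} (hf : Measurable f) (hfc : ∀ x y, |f x - f y| ≤ c |x - y|) :
    ∃ f' : ℝ → ℝ, ∃ B, Measurable f' ∧ (∀ x, |f' x| ≤ B) ∧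
      (∀ x y, |f' x - f' y| ≤ c |x - y|) ∧ f =ᵐ[μ] f' := by
  set clamp : ℝ → ℝ := fun x => max (-M) (min x M)
  have hclamp : LipschitzWith 1 clamp := (LipschitzWith.id.min_const M).const_max (-M)
  have hclamp_abs x : |clamp x| ≤ |M| :=
    abs_le.2 ⟨(neg_le_neg (le_abs_self M)).trans (le_max_left _ _),
      max_le (neg_le_abs M) ((min_le_right _ _).trans (le_abs_self M))⟩
  have hc_abs {x y : ℝ} (h : |x| ≤ |y|) : c |x| ≤ c |y| :=
    hcmono (abs_nonneg x) (abs_nonneg y) h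
  refine ⟨f ∘ clamp, |f 0| + c |M|, hf.comp hclamp.continuous.measurable, fun x => ?_,
    fun x y => ?_, ?_⟩
  · have := hfc (clamp x) 0
    rw [sub_zero] at this
    rw [Function.comp_apply]
    linarith [abs_sub_abs_le_abs_sub (f (clamp x)) (f 0), hc_abs (hclamp_abs x)]
  · refine (hfc _ _).trans (hc_abs ?_)
    simpa [abs_abs, ← Real.dist_eq] using hclamp.dist_le_mul x y
  · refine measure_mono_null (fun x hx => ?_) hμM
    show M < |x|
    by_contra hxM
    obtain ⟨hxl, hxu⟩ := abs_le.1 (not_lt.1 hxM)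
    exact hx (by simp [clamp, min_eq_left hxu, max_eq_right hxl])

namespace ProbabilityTheory.Kernel

variable (K : Kernel ℝ ℝ)

theorem measurable_kIter [IsMarkovKernel K] {f : ℝ → ℝ} (hf : Measurable f) (n : ℕ) :
    Measurable (kIter K n f) := by
  induction n with
  | zero => exact hf
  | succ n ih =>
    exact ((ih.stronglyMeasurable.comp_measurable measurable_snd).integral_kernel_prod_right'
      (κ := K)).measurable

theorem abs_kIter_le [IsMarkovKernel K] {f : ℝ → ℝ} {B : ℝ} (hB : ∀ x, |f x| ≤ B) (n : ℕ)
    (x : ℝ) : |kIter K n f x| ≤ B := by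
  induction n generalizing x with
  | zero => exact hB x
  | succ n ih =>
    simpa [kIter] using norm_integral_le_of_norm_le_const (μ := K x) (f := kIter K n f) (C := B)
      (.of_forall fun y => by simpa using ih y)

theorem kIter_const [IsMarkovKernel K] (a : ℝ) (n : ℕ) :
    kIter K n (fun _ => a) = fun _ => a := by
  induction n with
  | zero => rfl
  | succ n ih => funext x; simp [kIter, ih]

theorem kIter_const_mul (a : ℝ) (f : ℝ → ℝ) (n : ℕ) :
    kIter K n (fun x => a * f x) = fun x => a * kIter K n f x := by
  induction n with
  | zero => rfl
  | succ n ih => funext x; simp only [kIter, ih, integral_const_mul]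

theorem abs_kIter_sub_kIter_le [IsMarkovKernel K] {f g : ℝ → ℝ} {B ε : ℝ}
    (hf : Measurable f) (hg : Measurable g) (hfB : ∀ x, |f x| ≤ B) (hgB : ∀ x, |g x| ≤ B)
    (hfg : ∀ x, |f x - g x| ≤ ε) (n : ℕ) (x : ℝ) : |kIter K n f x - kIter K n g x| ≤ ε := by
  induction n generalizing x with
  | zero => exact hfg x
  | succ n ih =>
    have hint {h : ℝ → ℝ} (hh : Measurable h) (hhB : ∀ x, |h x| ≤ B) :
        Integrable (kIter K n h) (K x) :=
      .of_bound (measurable_kIter K hh n).aestronglyMeasurable B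
        (.of_forall (abs_kIter_le K hhB n))
    rw [kIter, kIter, ← integral_sub (hint hf hfB) (hint hg hgB)]
    simpa using norm_integral_le_of_norm_le_const (μ := K x) (C := ε)
      (f := fun y => kIter K n f y - kIter K n g y) (.of_forall fun y => by simpa using ih y)

theorem kIter_ae_eq_of_ae_eq [IsMarkovKernel K] {μ : Measure ℝ}
    (hinv : μ.bind (fun x => K x) = μ) {f g : ℝ → ℝ} (hf : Measurable f) (hg : Measurable g)
    (hfg : f =ᵐ[μ] g) (n : ℕ) : kIter K n f =ᵐ[μ] kIter K n g := by
  induction n with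
  | zero => exact hfg
  | succ n ih =>
    have hA : MeasurableSet {x | kIter K n f x ≠ kIter K n g x} :=
      (measurableSet_eq_fun (measurable_kIter K hf n) (measurable_kIter K hg n)).compl
    -- invariance: `∫ K x A dμ = μ A = 0`, so `K x A = 0` for `μ`-a.e. `x`
    have hK : ∀ᵐ x ∂μ, K x {y | kIter K n f y ≠ kIter K n g y} = 0 := by
      refine (lintegral_eq_zero_iff (K.measurable_coe hA)).1 ?_
      rw [← Measure.bind_apply hA K.measurable.aemeasurable, hinv]
      exact ae_iff.1 ih
    filter_upwards [hK] with x hx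
    exact integral_congr_ae (ae_iff.2 hx)

variable {K} [IsMarkovKernel K] {μ : Measure ℝ} [IsProbabilityMeasure μ]

theorem eLpNorm_kIter_sub_integral_le_of_lipschitzWith {g : ℝ → ℝ} {L : ℝ≥0}
    (hg : LipschitzWith L g) (n : ℕ) :
    eLpNorm (fun x => kIter K n g x - ∫ y, g y ∂μ) ⊤ μ ≤ L * uSeq K μ n := by
  rcases eq_or_ne L 0 with rfl | hL
  · have hconst : g = fun _ => g 0 := funext fun x => by simpa using hg.dist_le_mul x 0
    rw [hconst, kIter_const]
    simp only [MeasureTheory.integral_const, probReal_univ, one_smul, sub_self, eLpNorm_zero',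
      zero_le]
  set g₁ : ℝ → ℝ := fun x => (L : ℝ)⁻¹ * g x
  have hg₁ : LipschitzWith 1 g₁ := by
    have := (lipschitzWith_smul ((L : ℝ)⁻¹)).comp hg
    simp only [nnnorm_inv, NNReal.nnnorm_eq, inv_mul_cancel₀ hL] at this
    exact this
  have hgg₁ : g = fun x => (L : ℝ) * g₁ x := by
    funext x
    rw [mul_inv_cancel_left₀ (NNReal.coe_ne_zero.2 hL)]
  calc eLpNorm (fun x => kIter K n g x - ∫ y, g y ∂μ) ⊤ μ
      = L * eLpNorm (fun x => kIter K n g₁ x - ∫ y, g₁ y ∂μ) ⊤ μ := by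
        have hsmul : (fun x => kIter K n g x - ∫ y, g y ∂μ) =
            (L : ℝ) • fun x => kIter K n g₁ x - ∫ y, g₁ y ∂μ := by
          rw [hgg₁, kIter_const_mul, integral_const_mul]
          funext x
          simp [mul_sub]
        rw [hsmul, eLpNorm_const_smul, NNReal.enorm_eq]
    _ ≤ L * uSeq K μ n := by
        gcongr
        exact le_iSup (fun g : {g : ℝ → ℝ // LipschitzWith 1 g} =>
          eLpNorm (fun x => kIter K n g.1 x - ∫ y, g.1 y ∂μ) ⊤ μ) ⟨g₁, hg₁⟩

theorem eLpNorm_kIter_sub_integral_le_of_le_add_mul {f : ℝ → ℝ}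
    {B ε : ℝ} {L : ℝ≥0} (hf : Measurable f) (hfB : ∀ x, |f x| ≤ B)
    (hfL : ∀ x y, f x ≤ f y + ε + L * dist x y) (n : ℕ) :
    eLpNorm (fun x => kIter K n f x - ∫ y, f y ∂μ) ⊤ μ ≤
      ENNReal.ofReal (2 * ε) + L * uSeq K μ n := by
  obtain ⟨g, hgL, hgf⟩ :=
    exists_lipschitzWith_approx_of_le_add_mul (fun x => neg_le_of_abs_le (hfB x)) hfL
  have hε : 0 ≤ ε := by simpa using hfL 0 0
  have hg : Measurable g := hgL.continuous.measurable
  have hfg x : |f x - g x| ≤ ε := abs_le.2 ⟨by linarith [hgf x], by linarith [hgf x]⟩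
  have hgB x : |g x| ≤ B + ε := by
    have := abs_le.1 (hfB x)
    exact abs_le.2 ⟨by linarith [hgf x], by linarith [hgf x]⟩
  have hfB' x : |f x| ≤ B + ε := (hfB x).trans (by linarith)
  have hint : |(∫ y, g y ∂μ) - ∫ y, f y ∂μ| ≤ ε := by
    rw [← integral_sub (.of_bound hg.aestronglyMeasurable _ (.of_forall hgB))
      (.of_bound hf.aestronglyMeasurable _ (.of_forall hfB'))]
    simpa using norm_integral_le_of_norm_le_const (μ := μ) (C := ε) (f := fun y => g y - f y)
      (.of_forall fun y => by simpa [abs_sub_comm] using hfg y)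
  -- the error of replacing `f` by `g` is bounded pointwise; the rest is controlled by `uSeq`
  set err := fun x => (kIter K n f x - kIter K n g x) + ((∫ y, g y ∂μ) - ∫ y, f y ∂μ)
  have herr x : |err x| ≤ 2 * ε := by
    have := abs_kIter_sub_kIter_le K hf hg hfB' hgB hfg n x
    linarith [abs_add_le (kIter K n f x - kIter K n g x) ((∫ y, g y ∂μ) - ∫ y, f y ∂μ)]
  have hKf := measurable_kIter K hf n
  have hKg := measurable_kIter K hg n
  calc eLpNorm (fun x => kIter K n f x - ∫ y, f y ∂μ) ⊤ μ
      = eLpNorm (err + fun x => kIter K n g x - ∫ y, g y ∂μ) ⊤ μ := by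
        congr 1
        funext x
        simp only [err, Pi.add_apply]
        ring
    _ ≤ eLpNorm err ⊤ μ + eLpNorm (fun x => kIter K n g x - ∫ y, g y ∂μ) ⊤ μ :=
        eLpNorm_add_le (by simp only [err]; fun_prop) (by fun_prop) le_top
    _ ≤ ENNReal.ofReal (2 * ε) + L * uSeq K μ n :=
        add_le_add (eLpNorm_top_le_of_forall_abs_le herr)
          (eLpNorm_kIter_sub_integral_le_of_lipschitzWith hgL n)

theorem eLpNorm_kIter_sub_integral_le_of_concave
    (hinv : μ.bind (fun x => K x) = μ) {M : ℝ} (hμM : μ {x | M < |x|} = 0) {c : ℝ → ℝ}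
    (hcmono : MonotoneOn c (Set.Ici 0)) (hcconc : ConcaveOn ℝ (Set.Ici 0) c)
    {f : ℝ → ℝ} (hf : Measurable f) (hfc : ∀ x y, |f x - f y| ≤ c |x - y|)
    {δ : ℝ} (hδ : 0 < δ) (n : ℕ) :
    eLpNorm (fun x => kIter K n f x - ∫ y, f y ∂μ) ⊤ μ ≤
      ENNReal.ofReal (2 * c δ) + ENNReal.ofReal (c δ / δ) * uSeq K μ n := by
  obtain ⟨f', B, hf', hf'B, hf'c, hff'⟩ := exists_bounded_ae_eq_of_abs_sub_le hμM hcmono hf hfc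
  have hc0 : 0 ≤ c 0 := by simpa using hfc 0 0
  have hslope : 0 ≤ c δ / δ :=
    div_nonneg (hc0.trans (hcmono Set.self_mem_Ici (Set.mem_Ici.2 hδ.le) hδ.le)) hδ.le
  have hf'L x y : f' x ≤ f' y + c δ + (c δ / δ).toNNReal * dist x y := by
    rw [Real.coe_toNNReal _ hslope, Real.dist_eq, add_assoc]
    linarith [le_abs_self (f' x - f' y), hf'c x y,
      hcconc.le_add_div_mul hcmono hc0 hδ (abs_nonneg (x - y))]
  calc eLpNorm (fun x => kIter K n f x - ∫ y, f y ∂μ) ⊤ μ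
      = eLpNorm (fun x => kIter K n f' x - ∫ y, f' y ∂μ) ⊤ μ := by
        refine eLpNorm_congr_ae ?_
        filter_upwards [kIter_ae_eq_of_ae_eq K hinv hf hf' hff' n] with x hx
        rw [hx, integral_congr_ae hff']
    _ ≤ _ := eLpNorm_kIter_sub_integral_le_of_le_add_mul hf' hf'B hf'L n

end ProbabilityTheory.Kernel

theorem stmt_11_general (K : ProbabilityTheory.Kernel ℝ ℝ) [ProbabilityTheory.IsMarkovKernel K]
    (μ : Measure ℝ) [IsProbabilityMeasure μ]
    (hinv : μ.bind (fun x => K x) = μ)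
    (M0 : ℝ) (hμM : μ {x | M0 < |x|} = 0)
    (c : ℝ → ℝ) (hcmono : MonotoneOn c (Set.Ici 0)) (hcconc : ConcaveOn ℝ (Set.Ici 0) c)
    (f : ℝ → ℝ) (hfmeas : Measurable f) (hf : ∀ x y, |f x - f y| ≤ c |x - y|)
    (C ρ : ℝ) (hC : 0 < C) (hρ0 : 0 < ρ) (hρ1 : ρ < 1)
    (hu : ∀ n : ℕ, 1 ≤ n → uSeq K μ n ≤ ENNReal.ofReal (C * ρ ^ n))
    (D γ : ℝ) (hD : 0 < D)
    (hcD : ∀ t : ℝ, 0 < t → t < 1 → c t ≤ D * |Real.log t| ^ (-γ)) :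
    ∃ M > (0 : ℝ), ∀ n : ℕ, 1 ≤ n →
      eLpNorm (fun x => kIter K n f x - ∫ y, f y ∂μ) ⊤ μ ≤
        ENNReal.ofReal (M * (n : ℝ) ^ (-γ)) := by
  have hlogρ : 0 < -Real.log ρ := neg_pos.2 (Real.log_neg hρ0 hρ1)
  refine ⟨(2 + C) * D * (-Real.log ρ) ^ (-γ), by positivity, fun n hn => ?_⟩
  have hδ : 0 < ρ ^ n := pow_pos hρ0 n
  have hcδ0 : 0 ≤ c (ρ ^ n) := by simpa [abs_of_pos hδ] using (abs_nonneg _).trans (hf (ρ ^ n) 0)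
  have hcδ : c (ρ ^ n) ≤ D * (-Real.log ρ) ^ (-γ) * (n : ℝ) ^ (-γ) := by
    have := hcD _ hδ (pow_lt_one₀ hρ0.le hρ1 (by omega))
    rwa [Real.log_pow, abs_mul, Nat.abs_cast, abs_of_neg (neg_pos.1 hlogρ),
      Real.mul_rpow n.cast_nonneg hlogρ.le, mul_comm ((n : ℝ) ^ (-γ)), ← mul_assoc] at this
  calc eLpNorm (fun x => kIter K n f x - ∫ y, f y ∂μ) ⊤ μ
      ≤ ENNReal.ofReal (2 * c (ρ ^ n)) + ENNReal.ofReal (c (ρ ^ n) / ρ ^ n) * uSeq K μ n :=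
        K.eLpNorm_kIter_sub_integral_le_of_concave hinv hμM hcmono hcconc hfmeas hf hδ n
    _ ≤ ENNReal.ofReal (2 * c (ρ ^ n)) +
          ENNReal.ofReal (c (ρ ^ n) / ρ ^ n) * ENNReal.ofReal (C * ρ ^ n) := by
        gcongr
        exact hu n hn
    _ = ENNReal.ofReal ((2 + C) * c (ρ ^ n)) := by
        rw [← ENNReal.ofReal_mul (by positivity), ← ENNReal.ofReal_add (by positivity)
          (by positivity)]
        congr 1
        field_simp
    _ ≤ ENNReal.ofReal ((2 + C) * D * (-Real.log ρ) ^ (-γ) * (n : ℝ) ^ (-γ)) := by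
        refine ENNReal.ofReal_le_ofReal ?_
        linarith [mul_le_mul_of_nonneg_left hcδ (by positivity : (0 : ℝ) ≤ 2 + C)]

/-- Remark after Lemma `rhoarith`: if `u_n ≤ C ρ^n` and `c(t) ≤ D |log t|^{-γ}` on `(0,1)`,
then `‖K^n f − μ(f)‖_{∞,μ} = O(n^{-γ})`. -/
theorem stmt_11 (K : ProbabilityTheory.Kernel ℝ ℝ) [ProbabilityTheory.IsMarkovKernel K]
    (μ : Measure ℝ) [IsProbabilityMeasure μ]
    (hinv : μ.bind (fun x => K x) = μ)
    (M0 : ℝ) (hμM : μ {x | M0 < |x|} = 0)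
    (c : ℝ → ℝ) (hcmono : MonotoneOn c (Set.Ici 0)) (hcconc : ConcaveOn ℝ (Set.Ici 0) c)
    (hc0 : ∀ t, 0 ≤ t → 0 ≤ c t)
    (f : ℝ → ℝ) (hfmeas : Measurable f) (hf : ∀ x y, |f x - f y| ≤ c |x - y|)
    (C ρ : ℝ) (hC : 0 < C) (hρ0 : 0 < ρ) (hρ1 : ρ < 1)
    (hu : ∀ n : ℕ, 1 ≤ n → uSeq K μ n ≤ ENNReal.ofReal (C * ρ ^ n))
    (D γ : ℝ) (hD : 0 < D) (hγ : 0 < γ)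
    (hcD : ∀ t : ℝ, 0 < t → t < 1 → c t ≤ D * |Real.log t| ^ (-γ)) :
    ∃ M > (0 : ℝ), ∀ n : ℕ, 1 ≤ n →
      eLpNorm (fun x => kIter K n f x - ∫ y, f y ∂μ) ⊤ μ ≤
        ENNReal.ofReal (M * (n : ℝ) ^ (-γ)) :=
  stmt_11_general K μ hinv M0 hμM c hcmono hcconc f hfmeas hf C ρ hC hρ0 hρ1 hu D γ hD hcD
end

section
/- Let c : (0,∞) → [0,∞) be a concave nondecreasing function, and let C > 0 and ρ ∈ (0,1). Then Σ_{k=1}^{∞} k^{−1/2} c(C ρ^k) < ∞ if and only if ∫_0^1 c(t) / ( t √(|log t|) ) dt < ∞, where |log t| = −log t for t ∈ (0,1). -/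
/-!
Cut `(0, 1]` into the pieces `(ρ ^ (k + 1), ρ ^ k]`. On the `k`-th piece `c` lies between
`c (ρ ^ (k + 1))` and `c (ρ ^ k)`, and the weight `1 / (t √|log t|)`, which has the primitive
`-2 √(-log t)`, integrates to `2 √(-log ρ) (√(k + 1) - √k)`, a quantity between
`√(-log ρ) / √(k + 1)` and twice that. Hence the integral is comparable to the series for
`C = 1`, up to a shift of the index by one. A general `C` also only shifts the index, since
`ρ ^ m ≤ C ≤ ρ ^ (-m)` for some `m`, and shifts preserve convergence because the weights
`1 / √(k + 1)` decrease.
-/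

open MeasureTheory Set Real

lemma rpow_neg_one_div_two_eq_inv_sqrt {x : ℝ} (hx : 0 ≤ x) : x ^ (-(1 : ℝ) / 2) = (√x)⁻¹ := by
  rw [neg_div, rpow_neg hx, sqrt_eq_rpow]

lemma sqrt_add_one_sub_sqrt_le {x : ℝ} (hx : 0 ≤ x) : √(x + 1) - √x ≤ (√(x + 1))⁻¹ := by
  have hpos : 0 < √(x + 1) := sqrt_pos.2 (by linarith)
  rw [le_inv_comm₀ (sub_pos.2 (sqrt_lt_sqrt hx (lt_add_one x))) hpos, inv_eq_one_div,
    le_div_iff₀ (sub_pos.2 (sqrt_lt_sqrt hx (lt_add_one x)))]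
  nlinarith [sq_sqrt hx, sq_sqrt (show 0 ≤ x + 1 by linarith), sqrt_nonneg x]

lemma inv_sqrt_div_two_le_sqrt_add_one_sub_sqrt {x : ℝ} (hx : 0 ≤ x) :
    (√(x + 1))⁻¹ / 2 ≤ √(x + 1) - √x := by
  rw [inv_eq_one_div, div_div, div_le_iff₀ (by positivity)]
  nlinarith [sq_sqrt hx, sq_sqrt (show 0 ≤ x + 1 by linarith), sqrt_nonneg x,
    sqrt_le_sqrt (show x ≤ x + 1 by linarith)]

lemma hasDerivAt_neg_two_mul_sqrt_neg_log {x : ℝ} (hx0 : 0 < x) (hx1 : x < 1) :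
    HasDerivAt (fun t => -2 * √(-log t)) (x * √|log x|)⁻¹ x := by
  have hlog : 0 < -log x := neg_pos.2 (log_neg hx0 hx1)
  have hsqrt : √(-log x) ≠ 0 := (sqrt_pos.2 hlog).ne'
  refine ((((hasDerivAt_log hx0.ne').neg).sqrt hlog.ne').const_mul (-2)).congr_deriv ?_
  rw [abs_of_neg (log_neg hx0 hx1), Pi.neg_apply]
  field_simp

lemma integral_Ioc_inv_mul_sqrt_abs_log {u v : ℝ} (hu : 0 < u) (huv : u ≤ v) (hv : v ≤ 1) :
    IntegrableOn (fun t => (t * √|log t|)⁻¹) (Ioc u v) ∧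
      ∫ t in Ioc u v, (t * √|log t|)⁻¹ = 2 * √(-log u) - 2 * √(-log v) := by
  have hcont : ContinuousOn (fun t => -2 * √(-log t)) (Icc u v) :=
    continuousOn_const.mul (continuousOn_log.mono fun t ht => (hu.trans_le ht.1).ne').neg.sqrt
  have hderiv : ∀ x ∈ Ioo u v, HasDerivAt (fun t => -2 * √(-log t)) (x * √|log x|)⁻¹ x :=
    fun x hx => hasDerivAt_neg_two_mul_sqrt_neg_log (hu.trans hx.1) (hx.2.trans_le hv)
  have hint : IntegrableOn (fun t => (t * √|log t|)⁻¹) (Ioc u v) :=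
    intervalIntegral.integrableOn_deriv_of_nonneg hcont hderiv
      fun x hx => by have := hu.trans hx.1; positivity
  refine ⟨hint, ?_⟩
  rw [← intervalIntegral.integral_of_le huv,
    intervalIntegral.integral_eq_sub_of_hasDeriv_right_of_le huv hcont
      (fun x hx => (hderiv x hx).hasDerivWithinAt)
      ((intervalIntegrable_iff_integrableOn_Ioc_of_le huv).2 hint)]
  ring

lemma integrableOn_Ioc_pow_succ_pow_inv_mul_sqrt_abs_log {ρ : ℝ} (hρ0 : 0 < ρ) (hρ1 : ρ < 1)
    (k : ℕ) : IntegrableOn (fun t => (t * √|log t|)⁻¹) (Ioc (ρ ^ (k + 1)) (ρ ^ k)) :=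
  (integral_Ioc_inv_mul_sqrt_abs_log (pow_pos hρ0 _) (pow_le_pow_of_le_one hρ0.le hρ1.le
    k.le_succ) (pow_le_one₀ hρ0.le hρ1.le)).1

lemma integral_Ioc_pow_succ_pow_inv_mul_sqrt_abs_log {ρ : ℝ} (hρ0 : 0 < ρ) (hρ1 : ρ < 1) (k : ℕ) :
    ∫ t in Ioc (ρ ^ (k + 1)) (ρ ^ k), (t * √|log t|)⁻¹ = 2 * √(-log ρ) * (√(k + 1) - √k) := by
  rw [(integral_Ioc_inv_mul_sqrt_abs_log (pow_pos hρ0 _) (pow_le_pow_of_le_one hρ0.le hρ1.le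
    k.le_succ) (pow_le_one₀ hρ0.le hρ1.le)).2, log_pow, log_pow, ← mul_neg, ← mul_neg,
    sqrt_mul (Nat.cast_nonneg _), sqrt_mul (Nat.cast_nonneg _)]
  push_cast
  ring

section MonotoneMul

variable {c w : ℝ → ℝ} {u v : ℝ}

lemma integrableOn_Ioc_mul_of_monotoneOn (hc : MonotoneOn c (Icc u v)) (hcu : 0 ≤ c u)
    (hw : IntegrableOn w (Ioc u v)) : IntegrableOn (fun t => c t * w t) (Ioc u v) := by
  refine (hw.norm.const_mul (c v)).mono'
    ((aemeasurable_restrict_of_monotoneOn measurableSet_Ioc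
      (hc.mono Ioc_subset_Icc_self)).aestronglyMeasurable.mul hw.aestronglyMeasurable) ?_
  filter_upwards [ae_restrict_mem measurableSet_Ioc] with t ht
  have hut : c u ≤ c t := hc ⟨le_rfl, (ht.1.trans_le ht.2).le⟩ (Ioc_subset_Icc_self ht) ht.1.le
  have htv : c t ≤ c v := hc (Ioc_subset_Icc_self ht) ⟨(ht.1.trans_le ht.2).le, le_rfl⟩ ht.2
  rw [norm_mul, Real.norm_of_nonneg (hcu.trans hut)]
  exact mul_le_mul_of_nonneg_right htv (norm_nonneg _)

lemma mul_setIntegral_le_setIntegral_mul_of_monotoneOn (hc : MonotoneOn c (Icc u v))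
    (hcu : 0 ≤ c u) (hw : IntegrableOn w (Ioc u v)) (hw0 : ∀ t ∈ Ioc u v, 0 ≤ w t) :
    c u * ∫ t in Ioc u v, w t ≤ ∫ t in Ioc u v, c t * w t := by
  rw [← integral_const_mul]
  refine setIntegral_mono_on (hw.const_mul _) (integrableOn_Ioc_mul_of_monotoneOn hc hcu hw)
    measurableSet_Ioc fun t ht => mul_le_mul_of_nonneg_right ?_ (hw0 t ht)
  exact hc ⟨le_rfl, (ht.1.trans_le ht.2).le⟩ (Ioc_subset_Icc_self ht) ht.1.le

lemma setIntegral_mul_le_mul_setIntegral_of_monotoneOn (hc : MonotoneOn c (Icc u v))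
    (hcu : 0 ≤ c u) (hw : IntegrableOn w (Ioc u v)) (hw0 : ∀ t ∈ Ioc u v, 0 ≤ w t) :
    ∫ t in Ioc u v, c t * w t ≤ c v * ∫ t in Ioc u v, w t := by
  rw [← integral_const_mul]
  refine setIntegral_mono_on (integrableOn_Ioc_mul_of_monotoneOn hc hcu hw) (hw.const_mul _)
    measurableSet_Ioc fun t ht => mul_le_mul_of_nonneg_right ?_ (hw0 t ht)
  exact hc (Ioc_subset_Icc_self ht) ⟨(ht.1.trans_le ht.2).le, le_rfl⟩ ht.2

end MonotoneMul

lemma iUnion_Ioc_pow_succ_pow {ρ : ℝ} (hρ0 : 0 < ρ) (hρ1 : ρ < 1) :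
    ⋃ k : ℕ, Ioc (ρ ^ (k + 1)) (ρ ^ k) = Ioc 0 1 := by
  ext t
  simp only [mem_iUnion, mem_Ioc]
  constructor
  · rintro ⟨k, hk1, hk2⟩
    exact ⟨(pow_pos hρ0 _).trans hk1, hk2.trans (pow_le_one₀ hρ0.le hρ1.le)⟩
  · rintro ⟨ht0, ht1⟩
    exact exists_nat_pow_near_of_lt_one ht0 ht1 hρ0 hρ1

lemma pairwise_disjoint_Ioc_pow_succ_pow {ρ : ℝ} (hρ0 : 0 ≤ ρ) (hρ1 : ρ ≤ 1) :
    Pairwise (Function.onFun Disjoint fun k : ℕ => Ioc (ρ ^ (k + 1)) (ρ ^ k)) := by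
  simpa only [Order.succ_eq_add_one] using (pow_right_anti₀ hρ0 hρ1).pairwise_disjoint_on_Ioc_succ

lemma Summable.mul_of_le_shift {w g h : ℕ → ℝ} (hw : Antitone w) (hw0 : ∀ k, 0 ≤ w k)
    (hh : ∀ k, 0 ≤ h k) (m : ℕ) (hhg : ∀ k, h (k + m) ≤ g k)
    (hg : Summable fun k => w k * g k) : Summable fun k => w k * h k :=
  (summable_nat_add_iff m).1 <| hg.of_nonneg_of_le (fun _ => mul_nonneg (hw0 _) (hh _))
    fun k => mul_le_mul (hw (k.le_add_right m)) (hhg k) (hh _) (hw0 k)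

section Pieces

variable {c : ℝ → ℝ} {ρ : ℝ}

lemma integrableOn_Ioc_pow_succ_pow (hc0 : ∀ t, 0 < t → 0 ≤ c t)
    (hcmono : MonotoneOn c (Ioi 0)) (hρ0 : 0 < ρ) (hρ1 : ρ < 1) (k : ℕ) :
    IntegrableOn (fun t => c t * (t * √|log t|)⁻¹) (Ioc (ρ ^ (k + 1)) (ρ ^ k)) :=
  integrableOn_Ioc_mul_of_monotoneOn (hcmono.mono fun _ ht => (pow_pos hρ0 _).trans_le ht.1)
    (hc0 _ (pow_pos hρ0 _)) (integrableOn_Ioc_pow_succ_pow_inv_mul_sqrt_abs_log hρ0 hρ1 k)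

lemma inv_sqrt_mul_le_integral_Ioc_pow_succ_pow (hc0 : ∀ t, 0 < t → 0 ≤ c t)
    (hcmono : MonotoneOn c (Ioi 0)) (hρ0 : 0 < ρ) (hρ1 : ρ < 1) (k : ℕ) :
    √(-log ρ) * ((√(k + 1))⁻¹ * c (ρ ^ (k + 1))) ≤
      ∫ t in Ioc (ρ ^ (k + 1)) (ρ ^ k), c t * (t * √|log t|)⁻¹ :=
  calc √(-log ρ) * ((√(k + 1))⁻¹ * c (ρ ^ (k + 1)))
      = c (ρ ^ (k + 1)) * (2 * √(-log ρ) * ((√(k + 1))⁻¹ / 2)) := by ring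
    _ ≤ c (ρ ^ (k + 1)) * (2 * √(-log ρ) * (√(k + 1) - √k)) := by
      have := hc0 _ (pow_pos hρ0 (k + 1))
      gcongr
      exact inv_sqrt_div_two_le_sqrt_add_one_sub_sqrt k.cast_nonneg
    _ ≤ ∫ t in Ioc (ρ ^ (k + 1)) (ρ ^ k), c t * (t * √|log t|)⁻¹ := by
      rw [← integral_Ioc_pow_succ_pow_inv_mul_sqrt_abs_log hρ0 hρ1]
      exact mul_setIntegral_le_setIntegral_mul_of_monotoneOn
        (hcmono.mono fun _ ht => (pow_pos hρ0 _).trans_le ht.1) (hc0 _ (pow_pos hρ0 _))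
        (integrableOn_Ioc_pow_succ_pow_inv_mul_sqrt_abs_log hρ0 hρ1 k)
        fun t ht => by have := (pow_pos hρ0 _).trans ht.1; positivity

lemma integral_Ioc_pow_succ_pow_le_inv_sqrt_mul (hc0 : ∀ t, 0 < t → 0 ≤ c t)
    (hcmono : MonotoneOn c (Ioi 0)) (hρ0 : 0 < ρ) (hρ1 : ρ < 1) (k : ℕ) :
    ∫ t in Ioc (ρ ^ (k + 1)) (ρ ^ k), c t * (t * √|log t|)⁻¹ ≤
      2 * √(-log ρ) * ((√(k + 1))⁻¹ * c (ρ ^ k)) :=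
  calc (∫ t in Ioc (ρ ^ (k + 1)) (ρ ^ k), c t * (t * √|log t|)⁻¹)
      ≤ c (ρ ^ k) * (2 * √(-log ρ) * (√(k + 1) - √k)) := by
        rw [← integral_Ioc_pow_succ_pow_inv_mul_sqrt_abs_log hρ0 hρ1]
        exact setIntegral_mul_le_mul_setIntegral_of_monotoneOn
          (hcmono.mono fun _ ht => (pow_pos hρ0 _).trans_le ht.1) (hc0 _ (pow_pos hρ0 _))
          (integrableOn_Ioc_pow_succ_pow_inv_mul_sqrt_abs_log hρ0 hρ1 k)
          fun t ht => by have := (pow_pos hρ0 _).trans ht.1; positivity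
    _ ≤ c (ρ ^ k) * (2 * √(-log ρ) * (√(k + 1))⁻¹) := by
      have := hc0 _ (pow_pos hρ0 k)
      gcongr
      exact sqrt_add_one_sub_sqrt_le k.cast_nonneg
    _ = 2 * √(-log ρ) * ((√(k + 1))⁻¹ * c (ρ ^ k)) := by ring

end Pieces

lemma antitone_inv_sqrt_nat_add_one : Antitone fun k : ℕ => (√((k : ℝ) + 1))⁻¹ :=
  fun _ _ hkl => inv_anti₀ (sqrt_pos.2 (by positivity)) (sqrt_le_sqrt (by gcongr))

section Summability

variable {c : ℝ → ℝ} {ρ : ℝ}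

lemma integrableOn_Ioc_zero_one_of_summable (hc0 : ∀ t, 0 < t → 0 ≤ c t)
    (hcmono : MonotoneOn c (Ioi 0)) (hρ0 : 0 < ρ) (hρ1 : ρ < 1)
    (hsum : Summable fun k : ℕ => (√((k : ℝ) + 1))⁻¹ * c (ρ ^ (k + 1))) :
    IntegrableOn (fun t => c t * (t * √|log t|)⁻¹) (Ioc 0 1) := by
  have hsum' : Summable fun k : ℕ => (√((k : ℝ) + 1))⁻¹ * c (ρ ^ k) :=
    hsum.mul_of_le_shift antitone_inv_sqrt_nat_add_one (fun _ => by positivity)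
      (fun k => hc0 _ (pow_pos hρ0 k)) 1 fun _ => le_rfl
  rw [← iUnion_Ioc_pow_succ_pow hρ0 hρ1]
  refine integrableOn_iUnion_of_summable_integral_norm
    (integrableOn_Ioc_pow_succ_pow hc0 hcmono hρ0 hρ1) ?_
  refine (hsum'.mul_left (2 * √(-log ρ))).of_nonneg_of_le
    (fun _ => integral_nonneg fun _ => norm_nonneg _) fun k => ?_
  rw [setIntegral_congr_fun measurableSet_Ioc fun t ht => Real.norm_of_nonneg <|
    have ht0 := (pow_pos hρ0 _).trans ht.1
    mul_nonneg (hc0 t ht0) (by positivity)]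
  exact integral_Ioc_pow_succ_pow_le_inv_sqrt_mul hc0 hcmono hρ0 hρ1 k

lemma summable_of_integrableOn_Ioc_zero_one (hc0 : ∀ t, 0 < t → 0 ≤ c t)
    (hcmono : MonotoneOn c (Ioi 0)) (hρ0 : 0 < ρ) (hρ1 : ρ < 1)
    (hint : IntegrableOn (fun t => c t * (t * √|log t|)⁻¹) (Ioc 0 1)) :
    Summable fun k : ℕ => (√((k : ℝ) + 1))⁻¹ * c (ρ ^ (k + 1)) := by
  rw [← iUnion_Ioc_pow_succ_pow hρ0 hρ1] at hint
  have hL : 0 < √(-log ρ) := sqrt_pos.2 (neg_pos.2 (log_neg hρ0 hρ1))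
  refine (summable_mul_left_iff hL.ne').1 <|
    (hasSum_integral_iUnion (fun _ => measurableSet_Ioc)
      (pairwise_disjoint_Ioc_pow_succ_pow hρ0.le hρ1.le) hint).summable.of_nonneg_of_le
      (fun k => mul_nonneg hL.le (mul_nonneg (by positivity) (hc0 _ (pow_pos hρ0 _))))
      (inv_sqrt_mul_le_integral_Ioc_pow_succ_pow hc0 hcmono hρ0 hρ1)

lemma summable_inv_sqrt_mul_const_mul_pow_iff (hc0 : ∀ t, 0 < t → 0 ≤ c t)
    (hcmono : MonotoneOn c (Ioi 0)) {C : ℝ} (hC : 0 < C) (hρ0 : 0 < ρ) (hρ1 : ρ < 1) :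
    Summable (fun k : ℕ => (√((k : ℝ) + 1))⁻¹ * c (C * ρ ^ (k + 1))) ↔
      Summable fun k : ℕ => (√((k : ℝ) + 1))⁻¹ * c (ρ ^ (k + 1)) := by
  obtain ⟨m, hm⟩ := exists_pow_lt_of_lt_one (lt_min hC (inv_pos.2 hC)) hρ1
  have hpow (k : ℕ) : ρ ^ (k + m + 1) = ρ ^ m * ρ ^ (k + 1) := by ring
  constructor
  · refine fun h => h.mul_of_le_shift antitone_inv_sqrt_nat_add_one (fun _ => by positivity)
      (fun k => hc0 _ (pow_pos hρ0 _)) m fun k => hcmono (pow_pos hρ0 _)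
        (mul_pos hC (pow_pos hρ0 _)) ?_
    rw [hpow]
    exact mul_le_mul_of_nonneg_right (hm.le.trans (min_le_left _ _)) (pow_pos hρ0 _).le
  · refine fun h => h.mul_of_le_shift antitone_inv_sqrt_nat_add_one (fun _ => by positivity)
      (fun k => hc0 _ (mul_pos hC (pow_pos hρ0 _))) m fun k => hcmono
        (mul_pos hC (pow_pos hρ0 _)) (pow_pos hρ0 _) ?_
    rw [hpow, ← mul_assoc]
    refine mul_le_of_le_one_left (pow_pos hρ0 _).le ?_
    calc C * ρ ^ m ≤ C * C⁻¹ := by gcongr; exact hm.le.trans (min_le_right _ _)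
      _ = 1 := mul_inv_cancel₀ hC.ne'

end Summability

theorem stmt_12_general (c : ℝ → ℝ) (hc0 : ∀ t, 0 < t → 0 ≤ c t)
    (hcmono : MonotoneOn c (Set.Ioi 0))
    (C ρ : ℝ) (hC : 0 < C) (hρ0 : 0 < ρ) (hρ1 : ρ < 1) :
    Summable (fun k : ℕ => ((k : ℝ) + 1) ^ (-(1 : ℝ) / 2) * c (C * ρ ^ (k + 1))) ↔
      IntegrableOn (fun t => c t / (t * Real.sqrt |Real.log t|)) (Set.Ioo 0 1) := by
  have hweight : (fun k : ℕ => ((k : ℝ) + 1) ^ (-(1 : ℝ) / 2) * c (C * ρ ^ (k + 1))) =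
      fun k : ℕ => (√((k : ℝ) + 1))⁻¹ * c (C * ρ ^ (k + 1)) :=
    funext fun k => by rw [rpow_neg_one_div_two_eq_inv_sqrt (by positivity)]
  rw [hweight, summable_inv_sqrt_mul_const_mul_pow_iff hc0 hcmono hC hρ0 hρ1,
    ← integrableOn_Ioc_iff_integrableOn_Ioo]
  simp only [div_eq_mul_inv]
  exact ⟨integrableOn_Ioc_zero_one_of_summable hc0 hcmono hρ0 hρ1,
    summable_of_integrableOn_Ioc_zero_one hc0 hcmono hρ0 hρ1⟩

/-- For a concave nondecreasing `c : (0,∞) → [0,∞)`, `C > 0` and `ρ ∈ (0,1)`,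
`∑_{k ≥ 1} k^{-1/2} c(C ρ^k) < ∞` iff `∫_0^1 c(t)/(t √|log t|) dt < ∞`. -/
theorem stmt_12 (c : ℝ → ℝ) (hc0 : ∀ t, 0 < t → 0 ≤ c t)
    (hcmono : MonotoneOn c (Set.Ioi 0)) (hcconc : ConcaveOn ℝ (Set.Ioi 0) c)
    (C ρ : ℝ) (hC : 0 < C) (hρ0 : 0 < ρ) (hρ1 : ρ < 1) :
    Summable (fun k : ℕ => ((k : ℝ) + 1) ^ (-(1 : ℝ) / 2) * c (C * ρ ^ (k + 1))) ↔
      IntegrableOn (fun t => c t / (t * Real.sqrt |Real.log t|)) (Set.Ioo 0 1) :=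
  stmt_12_general c hc0 hcmono C ρ hC hρ0 hρ1
end

section
/- For every real number u, 1 − |cos(πu)| ≥ π (d(u,ℤ))², where d(u,ℤ) denotes the distance from u to the nearest integer. -/
/-!
Write `x = u - round u`, so `|x| ≤ 1/2` and, since `cos (π u) = ± cos (π x)` with
`cos (π x) ≥ 0`, the claim reads `(π x)² / π ≤ 1 - cos (π x)`. For `0 ≤ t ≤ 2` we have
`1 - cos t = 2 sin² (t/2)` and `sin y ≥ y - y³/6 ≥ 5y/6` on `[0, 1]`, hence
`1 - cos t ≥ (25/72) t² ≥ t² / π` because `π > 72/25`.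
-/

open Real

theorem sq_div_pi_le_one_sub_cos {t : ℝ} (ht : |t| ≤ 2) : t ^ 2 / π ≤ 1 - cos t := by
  wlog ht₀ : 0 ≤ t generalizing t
  · simpa using this (t := -t) (by rwa [abs_neg]) (by linarith)
  rw [abs_of_nonneg ht₀] at ht
  have hsin : 5 / 6 * (t / 2) ≤ sin (t / 2) := by
    have := sin_ge_sub_cube (x := t / 2) (by positivity)
    nlinarith [mul_nonneg ht₀ (mul_nonneg ht₀ (sub_nonneg.2 ht)), mul_nonneg ht₀ (sub_nonneg.2 ht)]
  have hcos : 1 - cos t = 2 * sin (t / 2) ^ 2 := by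
    rw [sin_sq_eq_half_sub]
    ring_nf
  calc t ^ 2 / π ≤ 25 / 72 * t ^ 2 := by
        rw [div_le_iff₀ pi_pos]
        nlinarith [pi_gt_three, sq_nonneg t]
    _ ≤ 1 - cos t := by
        rw [hcos]
        nlinarith [pow_le_pow_left₀ (by positivity) hsin 2]

theorem abs_pi_mul_sub_round_le (u : ℝ) : |π * (u - round u)| ≤ π / 2 := by
  rw [abs_mul, abs_of_pos pi_pos]
  nlinarith [abs_sub_round u, pi_pos]

theorem abs_cos_pi_mul_eq_cos_pi_mul_sub_round (u : ℝ) :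
    |cos (π * u)| = cos (π * (u - round u)) := by
  obtain ⟨hlower, hupper⟩ := abs_le.1 (abs_pi_mul_sub_round_le u)
  have hshift : π * (u - round u) = π * u - (round u : ℤ) * π := by ring
  rw [← abs_of_nonneg (cos_nonneg_of_neg_pi_div_two_le_of_le hlower hupper), hshift,
    cos_sub_int_mul_pi, abs_mul, abs_zpow, abs_neg, abs_one, one_zpow, one_mul]

/-- For every real `u`, `1 − |cos(πu)| ≥ π d(u,ℤ)²`, where `d(u,ℤ) = |u - round u|`
is the distance from `u` to the nearest integer. -/
theorem stmt_16 (u : ℝ) :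
    Real.pi * |u - round u| ^ 2 ≤ 1 - |Real.cos (Real.pi * u)| := by
  have hround : |π * (u - round u)| ≤ 2 :=
    (abs_pi_mul_sub_round_le u).trans (by linarith [pi_le_four])
  calc π * |u - round u| ^ 2 = (π * (u - round u)) ^ 2 / π := by
        rw [sq_abs]
        field_simp
    _ ≤ 1 - cos (π * (u - round u)) := sq_div_pi_le_one_sub_cos hround
    _ = 1 - |cos (π * u)| := by rw [abs_cos_pi_mul_eq_cos_pi_mul_sub_round]
end

section
/- Assume X₀ is ℱ₀-measurable, X₀ is integrable, and Σ_{n=1}^{∞} n^{−3/2} ‖E(S_n | ℱ₀)‖_∞ < ∞. Then, as m → ∞, m^{−1/2} ‖E(S_m | ℱ₀)‖_∞ → 0 and m^{−1/2} Σ_{j=1}^{∞} j^{−3/2} ‖E(S_{mj} | ℱ₀)‖_∞ → 0. -/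
/-!
Write `a n = ‖E(S_n | ℱ₀)‖_∞`. Since `S_{m+n} = S_m + S_n ∘ Tᵐ` and, by the tower property through
`T⁻ᵐ ℱ₀ ⊇ ℱ₀`, `‖E(S_n ∘ Tᵐ | ℱ₀)‖_∞ ≤ a n`, the sequence satisfies `a m ≤ a (m + n) + a n`.
Averaging this over `n < m` gives `m a_L ≤ ∑_{n<m} a_{L+n} + ∑_{n<m} a_n`. Taking `L = m j`,
multiplying by `(m j)^{-3/2}` and summing over `j ≥ 1`, the blocks `[m j, m j + m)` tile
`[m, ∞)`, so `m^{-1/2} ∑_j j^{-3/2} a_{mj}` is at most `2^{3/2}` times the tail of the convergent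
series plus `ζ(3/2) m^{-3/2} ∑_{n<m} a_n`, which tends to `0` by Kronecker's lemma. The first
claim is the term `j = 1`.
-/

open MeasureTheory Filter Finset
open scoped ENNReal NNReal Topology

theorem MeasurableSpace.le_comap_iterate {Ω : Type*} {F : MeasurableSpace Ω} {T : Ω → Ω}
    (hT : F ≤ F.comap T) : ∀ n, F ≤ F.comap T^[n]
  | 0 => by simp [MeasurableSpace.comap_id]
  | n + 1 => by
    rw [Function.iterate_succ, ← MeasurableSpace.comap_comp]
    exact hT.trans (MeasurableSpace.comap_mono (le_comap_iterate hT n))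

namespace MeasureTheory

variable {Ω : Type*} {F m0 : MeasurableSpace Ω} {μ : Measure Ω} [IsFiniteMeasure μ]
  {T : Ω → Ω}

theorem condExp_comp_measurePreserving (hF : F ≤ m0) (hT : MeasurePreserving T μ μ)
    {Y : Ω → ℝ} (hY : Integrable Y μ) :
    μ[Y ∘ T | F.comap T] =ᵐ[μ] μ[Y | F] ∘ T := by
  have hcomap : F.comap T ≤ m0 := (MeasurableSpace.comap_mono hF).trans hT.measurable.comap_le
  have hce : StronglyMeasurable[m0] (μ[Y | F]) := stronglyMeasurable_condExp.mono hF
  refine (ae_eq_condExp_of_forall_setIntegral_eq hcomap (hT.integrable_comp_of_integrable hY)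
    (fun s _ _ => (hT.integrable_comp_of_integrable integrable_condExp).integrableOn) ?_
    (stronglyMeasurable_condExp.comp_measurable
      (Measurable.of_comap_le le_rfl)).aestronglyMeasurable).symm
  rintro _ ⟨A, hA, rfl⟩ _
  have hmap : ∀ {Z : Ω → ℝ}, AEStronglyMeasurable Z μ →
      ∫ x in T ⁻¹' A, (Z ∘ T) x ∂μ = ∫ y in A, Z y ∂μ := fun hZ => by
    rw [Function.comp_def,
      ← setIntegral_map (hF A hA) (by rwa [hT.map_eq]) hT.measurable.aemeasurable, hT.map_eq]
  rw [hmap hce.aestronglyMeasurable, hmap hY.aestronglyMeasurable, setIntegral_condExp hF hY hA]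

theorem eLpNorm_condExp_comp_le (hF : F ≤ m0) (hT : MeasurePreserving T μ μ)
    (hFT : F ≤ F.comap T) {Y : Ω → ℝ} (hY : Integrable Y μ) {p : ℝ≥0∞} (hp : 1 ≤ p) :
    eLpNorm (μ[Y ∘ T | F]) p μ ≤ eLpNorm (μ[Y | F]) p μ :=
  have hcomap : F.comap T ≤ m0 := (MeasurableSpace.comap_mono hF).trans hT.measurable.comap_le
  calc eLpNorm (μ[Y ∘ T | F]) p μ = eLpNorm (μ[μ[Y | F] ∘ T | F]) p μ :=
        eLpNorm_congr_ae <| (condExp_condExp_of_le hFT hcomap).symm.trans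
          (condExp_congr_ae (condExp_comp_measurePreserving hF hT hY))
    _ ≤ eLpNorm (μ[Y | F] ∘ T) p μ := eLpNorm_condExp_le_eLpNorm _ hp
    _ = eLpNorm (μ[Y | F]) p μ :=
        eLpNorm_comp_measurePreserving (stronglyMeasurable_condExp.mono hF).aestronglyMeasurable hT

theorem eLpNorm_condExp_birkhoffSum_le_add (hF : F ≤ m0) (hT : MeasurePreserving T μ μ)
    (hFT : F ≤ F.comap T) {g : Ω → ℝ} (hg : Integrable g μ) {p : ℝ≥0∞} (hp : 1 ≤ p)
    (m n : ℕ) :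
    eLpNorm (μ[birkhoffSum T g m | F]) p μ ≤
      eLpNorm (μ[birkhoffSum T g (m + n) | F]) p μ + eLpNorm (μ[birkhoffSum T g n | F]) p μ := by
  have hB : ∀ k, Integrable (birkhoffSum T g k) μ := fun k =>
    integrable_finsetSum _ fun i _ => (hT.iterate i).integrable_comp_of_integrable hg
  have hsplit : birkhoffSum T g m = birkhoffSum T g (m + n) - birkhoffSum T g n ∘ T^[m] := by
    funext x
    simp [birkhoffSum_add]
  have hmeas : ∀ Y : Ω → ℝ, AEStronglyMeasurable (μ[Y | F]) μ := fun _ =>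
    (stronglyMeasurable_condExp.mono hF).aestronglyMeasurable
  calc eLpNorm (μ[birkhoffSum T g m | F]) p μ
      = eLpNorm (μ[birkhoffSum T g (m + n) | F] - μ[birkhoffSum T g n ∘ T^[m] | F]) p μ := by
        rw [hsplit]
        exact eLpNorm_congr_ae
          (condExp_sub (hB _) ((hT.iterate m).integrable_comp_of_integrable (hB n)) F)
    _ ≤ eLpNorm (μ[birkhoffSum T g (m + n) | F]) p μ +
          eLpNorm (μ[birkhoffSum T g n ∘ T^[m] | F]) p μ := eLpNorm_sub_le (hmeas _) (hmeas _) hp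
    _ ≤ _ := by
        gcongr
        exact eLpNorm_condExp_comp_le hF (hT.iterate m)
          (MeasurableSpace.le_comap_iterate hFT m) (hB n) hp

end MeasureTheory

theorem sum_Icc_one_iterate_eq_birkhoffSum {α M : Type*} [AddCommMonoid M] (T : α → α)
    (g : α → M) (k : ℕ) (x : α) : ∑ j ∈ Icc 1 k, g (T^[j] x) = birkhoffSum T (g ∘ T) k x := by
  induction k with
  | zero => simp
  | succ k ih =>
    rw [sum_Icc_succ_top (by omega), ih, birkhoffSum_succ, Function.comp_apply,
      Function.iterate_succ_apply']

namespace ENNReal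

theorem tsum_sum_range_mul_add (f : ℕ → ℝ≥0∞) {m : ℕ} (hm : m ≠ 0) :
    ∑' j, ∑ n ∈ range m, f (j * m + n) = ∑' k, f k := by
  have : NeZero m := ⟨hm⟩
  calc ∑' j, ∑ n ∈ range m, f (j * m + n) = ∑' p : ℕ × Fin m, f (p.1 * m + p.2) := by
        rw [ENNReal.tsum_prod']
        exact tsum_congr fun j => by
          rw [tsum_fintype, Fin.sum_univ_eq_sum_range (fun n => f (j * m + n))]
    _ = ∑' k, f k := (Nat.divModEquiv m).symm.tsum_eq f

/-- Kronecker's lemma. -/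
theorem tendsto_inv_mul_sum_range_mul {w b : ℕ → ℝ≥0∞} (hw : Monotone w)
    (hw_top : ∀ k, w k ≠ ∞) (hw_lim : Tendsto w atTop (𝓝 ∞)) (hb : ∑' k, b k ≠ ∞) :
    Tendsto (fun m => (w m)⁻¹ * ∑ k ∈ range m, w k * b k) atTop (𝓝 0) := by
  rw [ENNReal.tendsto_nhds_zero]
  intro ε hε
  have hε2 : 0 < ε / 2 := ENNReal.half_pos hε.ne'
  obtain ⟨N, hN⟩ := (ENNReal.tendsto_nhds_zero.1 (ENNReal.tendsto_sum_nat_add b hb) _ hε2).exists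
  have hhead : Tendsto (fun m => (w m)⁻¹ * ∑ k ∈ range N, w k * b k) atTop (𝓝 0) := by
    have hfin : ∑ k ∈ range N, w k * b k ≠ ∞ :=
      ENNReal.sum_ne_top.2 fun k _ => ENNReal.mul_ne_top (hw_top k)
        (ne_top_of_le_ne_top hb (ENNReal.le_tsum k))
    simpa using ENNReal.Tendsto.mul_const (tendsto_inv_iff.2 hw_lim) (Or.inr hfin)
  filter_upwards [ENNReal.tendsto_nhds_zero.1 hhead _ hε2, eventually_ge_atTop N]
    with m hm hNm
  have htail : (w m)⁻¹ * ∑ k ∈ Ico N m, w k * b k ≤ ε / 2 :=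
    calc (w m)⁻¹ * ∑ k ∈ Ico N m, w k * b k
        = ∑ k ∈ Ico N m, ((w m)⁻¹ * w k) * b k := by simp only [mul_sum, mul_assoc]
      _ ≤ ∑ k ∈ Ico N m, b k := by
        refine sum_le_sum fun k hk => mul_le_of_le_one_left' ?_
        calc (w m)⁻¹ * w k ≤ (w m)⁻¹ * w m := by gcongr; exact hw (mem_Ico.1 hk).2.le
          _ ≤ 1 := ENNReal.inv_mul_le_one _
      _ = ∑ k ∈ range (m - N), b (k + N) := by
        rw [sum_Ico_eq_sum_range]; simp only [add_comm N]
      _ ≤ ∑' k, b (k + N) := ENNReal.sum_le_tsum _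
      _ ≤ ε / 2 := hN
  calc (w m)⁻¹ * ∑ k ∈ range m, w k * b k
      = (w m)⁻¹ * ∑ k ∈ range N, w k * b k + (w m)⁻¹ * ∑ k ∈ Ico N m, w k * b k := by
        rw [← sum_range_add_sum_Ico _ hNm, mul_add]
    _ ≤ ε / 2 + ε / 2 := add_le_add hm htail
    _ = ε := ENNReal.add_halves ε

theorem rpow_neg_le_two_rpow_mul_rpow_neg {x y : ℝ≥0∞} {p : ℝ} (hp : 0 ≤ p) (h : y ≤ 2 * x) :
    x ^ (-p) ≤ 2 ^ p * y ^ (-p) := by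
  have h2 : (2 : ℝ≥0∞) ^ p ≠ 0 := (ENNReal.rpow_pos two_pos ofNat_ne_top).ne'
  have h2' : (2 : ℝ≥0∞) ^ p ≠ ∞ := ENNReal.rpow_ne_top_of_nonneg hp ofNat_ne_top
  rw [ENNReal.rpow_neg, ENNReal.rpow_neg]
  calc (x ^ p)⁻¹ = 2 ^ p * (2 ^ p * x ^ p)⁻¹ := by
        rw [ENNReal.mul_inv (Or.inl h2) (Or.inl h2'), ← mul_assoc, ENNReal.mul_inv_cancel h2 h2',
          one_mul]
    _ ≤ 2 ^ p * (y ^ p)⁻¹ := by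
        gcongr
        calc y ^ p ≤ (2 * x) ^ p := ENNReal.rpow_le_rpow h hp
          _ = 2 ^ p * x ^ p := ENNReal.mul_rpow_of_nonneg _ _ hp

theorem tsum_natCast_add_one_rpow_neg_ne_top {p : ℝ} (hp : 1 < p) :
    ∑' j : ℕ, ((j : ℝ≥0∞) + 1) ^ (-p) ≠ ∞ := by
  have hs : Summable fun j : ℕ => ((j + 1 : ℕ) : ℝ≥0) ^ (-p) :=
    (NNReal.summable_nat_add_iff 1).2 (NNReal.summable_rpow.2 (by linarith))
  refine ne_top_of_le_ne_top (ENNReal.tsum_coe_ne_top_iff_summable.2 hs)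
    (le_of_eq (tsum_congr fun j => ?_))
  rw [ENNReal.coe_rpow_of_ne_zero (by positivity)]
  push_cast
  rfl

end ENNReal

section SubadditiveSequence

variable {a : ℕ → ℝ≥0∞} {p : ℝ}

theorem natCast_mul_le_sum_range_add_sum_range (hsub : ∀ m n, a m ≤ a (m + n) + a n)
    (L m : ℕ) : (m : ℝ≥0∞) * a L ≤ ∑ n ∈ range m, a (L + n) + ∑ n ∈ range m, a n :=
  calc (m : ℝ≥0∞) * a L = ∑ _n ∈ range m, a L := by simp
    _ ≤ ∑ n ∈ range m, (a (L + n) + a n) := sum_le_sum fun n _ => hsub L n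
    _ = ∑ n ∈ range m, a (L + n) + ∑ n ∈ range m, a n := sum_add_distrib

theorem rpow_neg_mul_natCast_mul_le (hp : 0 ≤ p) (hsub : ∀ m n, a m ≤ a (m + n) + a n)
    {m L : ℕ} (hmL : m ≤ L) :
    (L : ℝ≥0∞) ^ (-p) * (m * a L) ≤
      2 ^ p * ∑ n ∈ range m, ((L + n : ℕ) : ℝ≥0∞) ^ (-p) * a (L + n) +
        (L : ℝ≥0∞) ^ (-p) * ∑ n ∈ range m, a n :=
  calc (L : ℝ≥0∞) ^ (-p) * (m * a L)
      ≤ (L : ℝ≥0∞) ^ (-p) * (∑ n ∈ range m, a (L + n) + ∑ n ∈ range m, a n) := by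
        gcongr; exact natCast_mul_le_sum_range_add_sum_range hsub L m
    _ = ∑ n ∈ range m, (L : ℝ≥0∞) ^ (-p) * a (L + n) +
          (L : ℝ≥0∞) ^ (-p) * ∑ n ∈ range m, a n := by rw [mul_add, mul_sum]
    _ ≤ ∑ n ∈ range m, 2 ^ p * ((L + n : ℕ) : ℝ≥0∞) ^ (-p) * a (L + n) +
          (L : ℝ≥0∞) ^ (-p) * ∑ n ∈ range m, a n := by
        gcongr with n hn
        have hnm := mem_range.1 hn
        exact ENNReal.rpow_neg_le_two_rpow_mul_rpow_neg hp (by norm_cast; omega)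
    _ = _ := by simp only [mul_sum, mul_assoc]

theorem rpow_one_sub_mul_tsum_le (hp : 0 ≤ p) (hsub : ∀ m n, a m ≤ a (m + n) + a n)
    {m : ℕ} (hm : m ≠ 0) :
    (m : ℝ≥0∞) ^ (1 - p) * ∑' j : ℕ, ((j : ℝ≥0∞) + 1) ^ (-p) * a (m * (j + 1)) ≤
      2 ^ p * ∑' k : ℕ, ((k + m : ℕ) : ℝ≥0∞) ^ (-p) * a (k + m) +
        (∑' j : ℕ, ((j : ℝ≥0∞) + 1) ^ (-p)) * ((m : ℝ≥0∞) ^ (-p) * ∑ n ∈ range m, a n) := by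
  have hterm : ∀ j : ℕ, (m : ℝ≥0∞) ^ (1 - p) * (((j : ℝ≥0∞) + 1) ^ (-p) * a (m * (j + 1))) ≤
      2 ^ p * ∑ n ∈ range m, ((j * m + n + m : ℕ) : ℝ≥0∞) ^ (-p) * a (j * m + n + m) +
        ((j : ℝ≥0∞) + 1) ^ (-p) * ((m : ℝ≥0∞) ^ (-p) * ∑ n ∈ range m, a n) := by
    intro j
    have hL : ((m * (j + 1) : ℕ) : ℝ≥0∞) ^ (-p) = (m : ℝ≥0∞) ^ (-p) * ((j : ℝ≥0∞) + 1) ^ (-p) := by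
      push_cast
      exact ENNReal.mul_rpow_of_ne_top (ENNReal.natCast_ne_top m) (by simp) _
    have hm1 : (m : ℝ≥0∞) ^ (1 - p) = (m : ℝ≥0∞) ^ (-p) * m := by
      rw [sub_eq_neg_add, ENNReal.rpow_add _ _ (by simpa) (ENNReal.natCast_ne_top m),
        ENNReal.rpow_one]
    have hidx : ∀ n, m * (j + 1) + n = j * m + n + m := fun n => by ring
    calc (m : ℝ≥0∞) ^ (1 - p) * (((j : ℝ≥0∞) + 1) ^ (-p) * a (m * (j + 1)))
        = ((m * (j + 1) : ℕ) : ℝ≥0∞) ^ (-p) * (m * a (m * (j + 1))) := by rw [hL, hm1]; ring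
      _ ≤ _ := rpow_neg_mul_natCast_mul_le hp hsub (Nat.le_mul_of_pos_right m (by omega))
      _ = _ := by simp only [hidx, hL]; ring
  calc (m : ℝ≥0∞) ^ (1 - p) * ∑' j : ℕ, ((j : ℝ≥0∞) + 1) ^ (-p) * a (m * (j + 1))
      = ∑' j : ℕ, (m : ℝ≥0∞) ^ (1 - p) * (((j : ℝ≥0∞) + 1) ^ (-p) * a (m * (j + 1))) :=
        ENNReal.tsum_mul_left.symm
    _ ≤ _ := ENNReal.tsum_le_tsum hterm
    _ = _ := by
        rw [ENNReal.tsum_add, ENNReal.tsum_mul_left, ENNReal.tsum_mul_right,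
          ENNReal.tsum_sum_range_mul_add (fun k => ((k + m : ℕ) : ℝ≥0∞) ^ (-p) * a (k + m)) hm]

theorem tendsto_rpow_one_sub_mul_tsum_of_le_add (hp : 1 < p) (ha0 : a 0 = 0)
    (hsub : ∀ m n, a m ≤ a (m + n) + a n)
    (hsum : ∑' k : ℕ, ((k : ℝ≥0∞) + 1) ^ (-p) * a (k + 1) ≠ ∞) :
    Tendsto (fun m : ℕ => (m : ℝ≥0∞) ^ (1 - p) *
      ∑' j : ℕ, ((j : ℝ≥0∞) + 1) ^ (-p) * a (m * (j + 1))) atTop (𝓝 0) := by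
  have hp0 : 0 < p := by linarith
  set g : ℕ → ℝ≥0∞ := fun k => (k : ℝ≥0∞) ^ (-p) * a k with hg_def
  have hg : ∑' k, g k ≠ ∞ := by
    -- `(0 : ℝ≥0∞) ^ (-p) = ∞`, but `∞ * a 0 = 0`
    rw [tsum_eq_zero_add' ENNReal.summable]
    simpa [g, ha0] using hsum
  have hH : Tendsto (fun m : ℕ => (m : ℝ≥0∞) ^ (-p) * ∑ k ∈ range m, a k) atTop (𝓝 0) := by
    have hw_lim : Tendsto (fun k : ℕ => (k : ℝ≥0∞) ^ p) atTop (𝓝 ∞) := by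
      have := ((ENNReal.continuous_rpow_const (y := p)).tendsto ∞).comp
        ENNReal.tendsto_nat_nhds_top
      rwa [ENNReal.top_rpow_of_pos hp0] at this
    convert ENNReal.tendsto_inv_mul_sum_range_mul (b := g)
      (fun k l hkl => ENNReal.rpow_le_rpow (by exact_mod_cast hkl) hp0.le)
      (fun k => ENNReal.rpow_ne_top_of_nonneg hp0.le (ENNReal.natCast_ne_top k)) hw_lim hg
      using 1
    funext m
    rw [ENNReal.rpow_neg]
    congr 1
    refine sum_congr rfl fun k _ => ?_
    rcases Nat.eq_zero_or_pos k with rfl | hk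
    · simp [g, ha0]
    · rw [hg_def, ← mul_assoc, ← ENNReal.rpow_add _ _ (by simp; omega) (ENNReal.natCast_ne_top k),
        add_neg_cancel, ENNReal.rpow_zero, one_mul]
  have hbound := (ENNReal.Tendsto.const_mul (ENNReal.tendsto_sum_nat_add g hg)
    (Or.inr (ENNReal.rpow_ne_top_of_nonneg hp0.le ENNReal.ofNat_ne_top (x := 2)))).add
    (ENNReal.Tendsto.const_mul hH (Or.inr (ENNReal.tsum_natCast_add_one_rpow_neg_ne_top hp)))
  simp only [mul_zero, add_zero] at hbound
  refine tendsto_of_tendsto_of_tendsto_of_le_of_le' tendsto_const_nhds hbound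
    (Eventually.of_forall fun _ => zero_le) ?_
  filter_upwards [eventually_ne_atTop 0] with m hm using rpow_one_sub_mul_tsum_le hp0.le hsub hm

theorem tendsto_rpow_one_sub_mul_of_le_add (hp : 1 < p) (ha0 : a 0 = 0)
    (hsub : ∀ m n, a m ≤ a (m + n) + a n)
    (hsum : ∑' k : ℕ, ((k : ℝ≥0∞) + 1) ^ (-p) * a (k + 1) ≠ ∞) :
    Tendsto (fun m : ℕ => (m : ℝ≥0∞) ^ (1 - p) * a m) atTop (𝓝 0) := by
  refine tendsto_of_tendsto_of_tendsto_of_le_of_le tendsto_const_nhds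
    (tendsto_rpow_one_sub_mul_tsum_of_le_add hp ha0 hsub hsum) (fun _ => zero_le) fun m => ?_
  dsimp only
  gcongr
  simpa using ENNReal.le_tsum (f := fun j : ℕ => ((j : ℝ≥0∞) + 1) ^ (-p) * a (m * (j + 1))) 0

end SubadditiveSequence

theorem stmt_17_general {Ω : Type*} [m0 : MeasurableSpace Ω] (μ : Measure Ω) [IsProbabilityMeasure μ]
    (T : Ω → Ω) (hT : MeasurePreserving T μ μ)
    (F0 : MeasurableSpace Ω) (hF0m : F0 ≤ m0) (hF0T : F0 ≤ MeasurableSpace.comap T F0)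
    (X0 : Ω → ℝ) (hX0int : Integrable X0 μ)
    (X : ℕ → Ω → ℝ) (hX : ∀ i, X i = X0 ∘ T^[i])
    (S : ℕ → Ω → ℝ) (hS : ∀ k, S k = fun ω => ∑ j ∈ Finset.Icc 1 k, X j ω)
    (hmw : ∑' k : ℕ, ((k : ℝ≥0∞) + 1) ^ (-(3 : ℝ) / 2) * eLpNorm (μ[S (k + 1)|F0]) ⊤ μ < ⊤) :
    Tendsto (fun m : ℕ => ((m : ℝ≥0∞)) ^ (-(1 : ℝ) / 2) * eLpNorm (μ[S m|F0]) ⊤ μ)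
        atTop (𝓝 0) ∧
      Tendsto (fun m : ℕ => ((m : ℝ≥0∞)) ^ (-(1 : ℝ) / 2) *
          ∑' j : ℕ, ((j : ℝ≥0∞) + 1) ^ (-(3 : ℝ) / 2) * eLpNorm (μ[S (m * (j + 1))|F0]) ⊤ μ)
        atTop (𝓝 0) := by
  have hSB : ∀ k, S k = birkhoffSum T (X0 ∘ T) k := fun k => by
    funext ω
    simp only [hS, hX, Function.comp_apply]
    exact sum_Icc_one_iterate_eq_birkhoffSum T X0 k ω
  set a : ℕ → ℝ≥0∞ := fun k => eLpNorm (μ[S k|F0]) ⊤ μ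
  have ha0 : a 0 = 0 := by simp [a, hSB]
  have hsub : ∀ m n, a m ≤ a (m + n) + a n := by
    have hint : Integrable (X0 ∘ T) μ :=
      memLp_one_iff_integrable.1 ((memLp_one_iff_integrable.2 hX0int).comp_measurePreserving hT)
    intro m n
    simp only [a, hSB]
    exact eLpNorm_condExp_birkhoffSum_le_add hF0m hT hF0T hint le_top m n
  rw [show -(3 : ℝ) / 2 = -(3 / 2) by norm_num] at hmw ⊢
  rw [show -(1 : ℝ) / 2 = 1 - 3 / 2 by norm_num]
  have hp : (1 : ℝ) < 3 / 2 := by norm_num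
  have h1 := tendsto_rpow_one_sub_mul_of_le_add hp ha0 hsub hmw.ne
  have h2 := tendsto_rpow_one_sub_mul_tsum_of_le_add hp ha0 hsub hmw.ne
  exact ⟨h1, h2⟩

/-- Lemma `techlemma`: under `∑ n^{-3/2} ‖E(S_n|F₀)‖_∞ < ∞`, one has
`m^{-1/2} ‖E(S_m|F₀)‖_∞ → 0` and `m^{-1/2} ∑_j j^{-3/2} ‖E(S_{mj}|F₀)‖_∞ → 0`. -/
theorem stmt_17 {Ω : Type*} [m0 : MeasurableSpace Ω] (μ : Measure Ω) [IsProbabilityMeasure μ]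
    (T : Ω → Ω) (hTbij : Function.Bijective T) (hT : MeasurePreserving T μ μ)
    (F0 : MeasurableSpace Ω) (hF0m : F0 ≤ m0) (hF0T : F0 ≤ MeasurableSpace.comap T F0)
    (X0 : Ω → ℝ) (hX0meas : @Measurable Ω ℝ F0 _ X0) (hX0int : Integrable X0 μ)
    (X : ℕ → Ω → ℝ) (hX : ∀ i, X i = X0 ∘ T^[i])
    (S : ℕ → Ω → ℝ) (hS : ∀ k, S k = fun ω => ∑ j ∈ Finset.Icc 1 k, X j ω)
    (hmw : ∑' k : ℕ, ((k : ℝ≥0∞) + 1) ^ (-(3 : ℝ) / 2) * eLpNorm (μ[S (k + 1)|F0]) ⊤ μ < ⊤) :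
    Tendsto (fun m : ℕ => ((m : ℝ≥0∞)) ^ (-(1 : ℝ) / 2) * eLpNorm (μ[S m|F0]) ⊤ μ)
        atTop (𝓝 0) ∧
      Tendsto (fun m : ℕ => ((m : ℝ≥0∞)) ^ (-(1 : ℝ) / 2) *
          ∑' j : ℕ, ((j : ℝ≥0∞) + 1) ^ (-(3 : ℝ) / 2) * eLpNorm (μ[S (m * (j + 1))|F0]) ⊤ μ)
        atTop (𝓝 0) :=
  stmt_17_general (m0 := m0) μ T hT F0 hF0m hF0T X0 hX0int X hX S hS hmw
end

section
/- Let J ≥ 1 and let A_j : (0,∞) × ℕ × ℕ → ℝ, j = 1,…,J, be functions such that for each j, n, m the map x ↦ A_j(x,n,m) is non-increasing on (0,∞), and such that for every x > 0 and every j, limsup_{m→∞} limsup_{n→∞} A_j(x,n,m) = −∞ (limsups taken in the extended reals). Then for any sequence (u_n) of positive reals with u_n → ∞, there exists a sequence (m_n) of positive integers with m_n → ∞ and m_n ≤ u_n such that for every x > 0 and every j = 1,…,J, limsup_{n→∞} A_j(x,n,m_n) = −∞, i.e. A_j(x,n,m_n) → −∞ as n → ∞. -/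
open Filter

/-- Lemma `convergence`: a diagonal-selection lemma. If each `A_j(x, n, m)` is
non-increasing in `x > 0` and `limsup_m limsup_n A_j(x,n,m) = -∞` for every `x > 0`,
then for any `u_n → ∞` one can choose integers `m_n → ∞` with `m_n ≤ u_n` such that
`A_j(x, n, m_n) → -∞` for every `x > 0` and every `j`. -/
theorem stmt_18 (J : ℕ) (hJ : 1 ≤ J) (A : Fin J → ℝ → ℕ → ℕ → ℝ)
    (hmono : ∀ j n m, AntitoneOn (fun x => A j x n m) (Set.Ioi 0))
    (hlim : ∀ j, ∀ x > (0 : ℝ),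
      limsup (fun m : ℕ => limsup (fun n : ℕ => (A j x n m : EReal)) atTop) atTop = ⊥)
    (u : ℕ → ℝ) (hu0 : ∀ n, 0 < u n) (huT : Tendsto u atTop atTop) :
    ∃ m : ℕ → ℕ, Tendsto m atTop atTop ∧ (∀ n, (m n : ℝ) ≤ u n) ∧
      ∀ j, ∀ x > (0 : ℝ), Tendsto (fun n => A j x n (m n)) atTop atBot := by
  classical
  -- Step A: eventual goodness in m
  have hE : ∀ N : ℕ, ∀ᶠ m in atTop, ∀ j : Fin J, ∀ k : ℕ, k ≤ N →
      limsup (fun n : ℕ => (A j (1/((k:ℝ)+1)) n m : EReal)) atTop < ((-(N:ℝ) : ℝ) : EReal) := by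
    intro N
    rw [eventually_all]
    intro j
    refine (eventually_all_finite (Set.finite_Iic N)).2 ?_
    intro k hk
    have hx : (0:ℝ) < 1/((k:ℝ)+1) := by positivity
    have h := hlim j _ hx
    exact eventually_lt_of_limsup_lt (by rw [h]; exact EReal.bot_lt_coe _)
  have hEx : ∀ N b : ℕ, ∃ m, b ≤ m ∧ ∀ j : Fin J, ∀ k : ℕ, k ≤ N →
      limsup (fun n : ℕ => (A j (1/((k:ℝ)+1)) n m : EReal)) atTop < ((-(N:ℝ) : ℝ) : EReal) :=
    fun N b => ((eventually_ge_atTop b).and (hE N)).exists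
  choose f hf1 hf2 using hEx
  -- define φ
  set φ : ℕ → ℕ := fun N => Nat.rec 0 (fun N ih => f (N+1) (max (ih+1) (N+1))) N with hφdef
  have hφ0 : φ 0 = 0 := rfl
  have hφsucc : ∀ N, φ (N+1) = f (N+1) (max (φ N + 1) (N+1)) := fun N => rfl
  have hφge : ∀ N, N ≤ φ N := by
    intro N
    cases N with
    | zero => simp [hφ0]
    | succ N =>
      have := hf1 (N+1) (max (φ N + 1) (N+1))
      rw [hφsucc]
      exact le_trans (le_max_right _ _) this
  have hφmono : StrictMono φ := by
    apply strictMono_nat_of_lt_succ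
    intro N
    have := hf1 (N+1) (max (φ N + 1) (N+1))
    rw [hφsucc]
    exact lt_of_lt_of_le (Nat.lt_succ_self _) (le_trans (le_max_left _ _) this)
  have hφgood : ∀ N : ℕ, 1 ≤ N → ∀ j : Fin J, ∀ k : ℕ, k ≤ N →
      limsup (fun n : ℕ => (A j (1/((k:ℝ)+1)) n (φ N) : EReal)) atTop
        < ((-(N:ℝ) : ℝ) : EReal) := by
    intro N hN j k hk
    obtain ⟨M, rfl⟩ := Nat.exists_eq_add_of_le hN
    rw [Nat.add_comm] at *
    rw [hφsucc]
    exact hf2 (M+1) _ j k hk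
  -- Step B: thresholds in n
  have hQ' : ∀ N : ℕ, ∃ a : ℕ, ∀ n ≥ a, 1 ≤ N → ∀ j : Fin J, ∀ k : ℕ, k ≤ N →
      A j (1/((k:ℝ)+1)) n (φ N) < -(N:ℝ) := by
    intro N
    rcases Nat.eq_zero_or_pos N with h | h
    · exact ⟨0, fun n _ h1 => absurd h1 (by omega)⟩
    · have hQ : ∀ᶠ n in atTop, ∀ j : Fin J, ∀ k : ℕ, k ≤ N →
          A j (1/((k:ℝ)+1)) n (φ N) < -(N:ℝ) := by
        rw [eventually_all]
        intro j
        refine (eventually_all_finite (Set.finite_Iic N)).2 ?_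
        intro k hk
        have := eventually_lt_of_limsup_lt (hφgood N h j k hk)
        exact this.mono (fun n hn => by exact_mod_cast hn)
      obtain ⟨a, ha⟩ := eventually_atTop.mp hQ
      exact ⟨a, fun n hn _ => ha n hn⟩
  choose ψ hψ using hQ'
  -- Step C: the diagonal sequence
  set P : ℕ → ℕ → Prop := fun n N => (φ N : ℝ) ≤ u n ∧ (ψ N ≤ n ∨ N = 0) with hPdef
  set F : ℕ → ℕ := fun n => Nat.findGreatest (P n) n with hFdef
  have hP0 : ∀ n, P n 0 := by
    intro n
    refine ⟨?_, Or.inr rfl⟩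
    rw [hφ0]
    exact le_of_lt (by simpa using hu0 n)
  have hPF : ∀ n, P n (F n) := fun n => Nat.findGreatest_spec (Nat.zero_le n) (hP0 n)
  have hFtend : Tendsto F atTop atTop := by
    rw [tendsto_atTop]
    intro K
    filter_upwards [huT.eventually_ge_atTop (φ K : ℝ), eventually_ge_atTop (ψ K),
      eventually_ge_atTop K] with n e1 e2 e3
    exact Nat.le_findGreatest e3 ⟨e1, Or.inl e2⟩
  refine ⟨fun n => φ (F n), ?_, fun n => (hPF n).1, ?_⟩
  · exact tendsto_atTop_mono (fun n => hφge (F n)) hFtend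
  · intro j x hx
    rw [tendsto_atBot]
    intro c
    obtain ⟨k, hk⟩ := exists_nat_one_div_lt hx
    set N : ℕ := max k (max 1 ⌈-c⌉₊) with hNdef
    have hNc : -(N:ℝ) ≤ c := by
      have h1 : (-c) ≤ (⌈-c⌉₊ : ℝ) := Nat.le_ceil _
      have h2 : ((⌈-c⌉₊ : ℕ) : ℝ) ≤ (N : ℝ) := by
        exact_mod_cast le_trans (le_max_right 1 _) (le_max_right k _)
      linarith
    filter_upwards [hFtend.eventually_ge_atTop N] with n hn
    have hP := hPF n
    have h1N : 1 ≤ N := le_trans (le_max_left 1 _) (le_max_right k _)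
    have h1F : 1 ≤ F n := le_trans h1N hn
    have hψn : ψ (F n) ≤ n := by
      rcases hP.2 with h | h
      · exact h
      · omega
    have key := hψ (F n) n hψn h1F j k (le_trans (le_trans (le_max_left k _) hn) le_rfl)
    have hmem1 : (1/((k:ℝ)+1)) ∈ Set.Ioi (0:ℝ) := by
      simp only [Set.mem_Ioi]; positivity
    have hmem2 : x ∈ Set.Ioi (0:ℝ) := hx
    have hmon := hmono j n (φ (F n)) hmem1 hmem2 hk.le
    have hFN : -(F n : ℝ) ≤ -(N : ℝ) := by
      have : (N:ℝ) ≤ (F n : ℝ) := by exact_mod_cast hn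
      linarith
    calc A j x n (φ (F n)) ≤ A j (1/((k:ℝ)+1)) n (φ (F n)) := hmon
      _ ≤ c := by linarith
end

section
/- Assume X₀ is ℱ₀-measurable and ‖X₀‖_∞ < ∞. Fix an integer m ≥ 1 and for i ≥ 1 set X_{i,m} = Σ_{j=(i−1)m+1}^{im} X_j and D_{i,m} = X_{i,m} − E(X_{i,m} | ℱ_{(i−1)m}). Then for every real σ² ≥ 0, limsup_{n→∞} ‖ (1/n) Σ_{j=1}^{[n/m]} E( D_{j,m}² | ℱ_{(j−1)m} ) − σ² ‖_∞ ≤ m^{−1} ‖E(S_m | ℱ₀)‖_∞² + ‖ m^{−1} E(S_m² | ℱ₀) − σ² ‖_∞, where [x] denotes the integer part of x. -/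
/-!
Shifting by `T^{im}` carries `ℱ₀` to `ℱ_{im}` and `S_m` to the block sum `X_{i+1,m}`, and
conditional expectations commute with measure-preserving maps, so
`E(D²_{i+1,m} | ℱ_{im}) = V ∘ T^{im}` for the conditional variance
`V = Var(S_m | ℱ₀) = E(S_m² | ℱ₀) - E(S_m | ℱ₀)²`. Each summand is thus within
`‖V - mσ²‖_∞ ≤ ‖E(S_m | ℱ₀)‖²_∞ + m ‖m⁻¹ E(S_m² | ℱ₀) - σ²‖_∞` of `mσ²`, and averaging `[n/m]` of
them over `n` costs a factor `[n/m]/n ≤ 1/m` plus an error `([n/m] m/n - 1) σ² → 0`.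
-/

open MeasureTheory Filter Finset ProbabilityTheory
open scoped ENNReal Topology

section Transport

variable {α β : Type*} {mα : MeasurableSpace α} {m mβ : MeasurableSpace β}
  {μ : Measure α} {ν : Measure β} [IsFiniteMeasure μ] {φ : α → β}

theorem condExp_comp_ae_eq (hφ : MeasurePreserving φ μ ν) (hm : m ≤ mβ) {f : β → ℝ}
    (hf : Integrable f ν) : μ[f ∘ φ | m.comap φ] =ᵐ[μ] ν[f | m] ∘ φ := by
  have : IsFiniteMeasure ν := hφ.map_eq ▸ inferInstance
  have hcomap : m.comap φ ≤ mα := (MeasurableSpace.comap_mono hm).trans hφ.measurable.comap_le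
  have setIntegral_comp {g : β → ℝ} (hg : AEStronglyMeasurable g ν) {t : Set β}
      (ht : MeasurableSet t) : ∫ x in φ ⁻¹' t, g (φ x) ∂μ = ∫ y in t, g y ∂ν := by
    rw [← hφ.map_eq] at hg ⊢
    exact (setIntegral_map ht hg hφ.aemeasurable).symm
  refine (ae_eq_condExp_of_forall_setIntegral_eq hcomap (hφ.integrable_comp_of_integrable hf)
    (fun s _ _ => (hφ.integrable_comp_of_integrable integrable_condExp).integrableOn) ?_ ?_).symm
  · rintro _ ⟨t, ht, rfl⟩ -
    rw [Function.comp_def, Function.comp_def,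
      setIntegral_comp integrable_condExp.aestronglyMeasurable (hm t ht),
      setIntegral_comp hf.aestronglyMeasurable (hm t ht), setIntegral_condExp hm hf ht]
  · exact (stronglyMeasurable_condExp.comp_measurable
      (Measurable.of_comap_le le_rfl)).aestronglyMeasurable

theorem condVar_comp_ae_eq (hφ : MeasurePreserving φ μ ν) (hm : m ≤ mβ) {f : β → ℝ}
    (hf : MemLp f 2 ν) : Var[f ∘ φ; μ | m.comap φ] =ᵐ[μ] Var[f; ν | m] ∘ φ := by
  have : IsFiniteMeasure ν := hφ.map_eq ▸ inferInstance
  have hdev : f ∘ φ - μ[f ∘ φ | m.comap φ] =ᵐ[μ] (f - ν[f | m]) ∘ φ := by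
    filter_upwards [condExp_comp_ae_eq hφ hm (hf.integrable one_le_two)] with x hx
    simp [hx]
  calc Var[f ∘ φ; μ | m.comap φ]
      =ᵐ[μ] μ[((f - ν[f | m]) ^ 2) ∘ φ | m.comap φ] :=
        condExp_congr_ae (by exact hdev.fun_comp (· ^ 2))
    _ =ᵐ[μ] Var[f; ν | m] ∘ φ :=
      condExp_comp_ae_eq hφ hm (hf.sub (hf.condExp one_le_two)).integrable_sq

end Transport

theorem eLpNorm_condVar_sub_le {Ω : Type*} {m m₀ : MeasurableSpace Ω} {μ : Measure Ω}
    [IsFiniteMeasure μ] (hm : m ≤ m₀) {f : Ω → ℝ} (hf : MemLp f 2 μ) {k : ℕ} (hk : k ≠ 0)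
    (c : ℝ) :
    eLpNorm (fun ω => Var[f; μ | m] ω - k * c) ⊤ μ ≤
      eLpNorm μ[f | m] ⊤ μ ^ 2 + k * eLpNorm (fun ω => (k : ℝ)⁻¹ * μ[f ^ 2 | m] ω - c) ⊤ μ := by
  have hmeas {g : Ω → ℝ} : AEStronglyMeasurable μ[g | m] μ :=
    integrable_condExp.aestronglyMeasurable
  calc eLpNorm (fun ω => Var[f; μ | m] ω - k * c) ⊤ μ
      = eLpNorm ((k : ℝ) • (fun ω => (k : ℝ)⁻¹ * μ[f ^ 2 | m] ω - c)
          - fun ω => μ[f | m] ω * μ[f | m] ω) ⊤ μ := by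
        refine eLpNorm_congr_ae ?_
        filter_upwards [condVar_ae_eq_condExp_sq_sub_sq_condExp hm hf] with ω hω
        simp only [hω, Pi.sub_apply, Pi.pow_apply, Pi.smul_apply, smul_eq_mul]
        field_simp
        ring
    _ ≤ eLpNorm ((k : ℝ) • (fun ω => (k : ℝ)⁻¹ * μ[f ^ 2 | m] ω - c)) ⊤ μ
          + eLpNorm (fun ω => μ[f | m] ω * μ[f | m] ω) ⊤ μ :=
        eLpNorm_sub_le (((hmeas.const_mul _).sub aestronglyMeasurable_const).const_smul _)
          (hmeas.mul hmeas) le_top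
    _ ≤ k * eLpNorm (fun ω => (k : ℝ)⁻¹ * μ[f ^ 2 | m] ω - c) ⊤ μ
          + 1 * eLpNorm μ[f | m] ⊤ μ * eLpNorm μ[f | m] ⊤ μ := by
        rw [eLpNorm_const_smul, Real.enorm_natCast]
        gcongr
        exact_mod_cast eLpNorm_le_eLpNorm_top_mul_eLpNorm ⊤ _ hmeas (· * ·) 1
          (.of_forall fun ω => by simp [nnnorm_mul])
    _ = _ := by ring

theorem tendsto_natDiv_mul_div_atTop {m : ℕ} (hm : m ≠ 0) :
    Tendsto (fun n : ℕ => ((n / m : ℕ) * m : ℝ) / n) atTop (𝓝 1) := by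
  have hlow : Tendsto (fun n : ℕ => 1 - (m : ℝ) / n) atTop (𝓝 1) := by
    simpa using tendsto_const_nhds.sub (tendsto_const_div_atTop_nhds_zero_nat (m : ℝ))
  refine tendsto_of_tendsto_of_tendsto_of_le_of_le' hlow tendsto_const_nhds ?_ ?_
  all_goals
    filter_upwards [eventually_gt_atTop 0] with n hn
    have hn' : (0 : ℝ) < n := by exact_mod_cast hn
    have h1 : ((n / m : ℕ) * m : ℝ) ≤ n := by exact_mod_cast Nat.div_mul_le_self n m
    have h2 : (n : ℝ) < (n / m : ℕ) * m + m := by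
      exact_mod_cast (Nat.lt_div_mul_add (Nat.pos_of_ne_zero hm))
  · rw [sub_le_iff_le_add, ← add_div, le_div_iff₀ hn']
    linarith
  · rwa [div_le_one hn']

theorem enorm_inv_natCast_mul_natDiv_le (n m : ℕ) :
    ‖(n : ℝ)⁻¹‖ₑ * (n / m : ℕ) ≤ (m : ℝ≥0∞)⁻¹ := by
  have hreal : (n : ℝ)⁻¹ * (n / m : ℕ) ≤ (m : ℝ)⁻¹ := by
    calc (n : ℝ)⁻¹ * (n / m : ℕ) ≤ (n : ℝ)⁻¹ * (n / m) := by gcongr; exact Nat.cast_div_le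
      _ ≤ (m : ℝ)⁻¹ := by
        rcases eq_or_ne n 0 with rfl | hn
        · simp
        · field_simp; rfl
  rcases eq_or_ne m 0 with rfl | hm
  · simp
  rw [← Real.enorm_natCast, ← enorm_mul, Real.enorm_of_nonneg (by positivity),
    ← ENNReal.ofReal_natCast, ← ENNReal.ofReal_inv_of_pos (by positivity)]
  exact ENNReal.ofReal_le_ofReal hreal

section BlockAverage

variable {Ω : Type*} [MeasurableSpace Ω] {μ : Measure Ω} {G : ℕ → Ω → ℝ} {m : ℕ} {B : ℝ≥0∞}

theorem eLpNorm_blockAverage_sub_le (hG : ∀ j, AEStronglyMeasurable (G j) μ) (c : ℝ)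
    (hB : ∀ j, 1 ≤ j → eLpNorm (fun ω => G j ω - m * c) ⊤ μ ≤ B) (n : ℕ) :
    eLpNorm (fun ω => (n : ℝ)⁻¹ * (∑ j ∈ Icc 1 (n / m), G j ω) - c) ⊤ μ ≤
      (m : ℝ≥0∞)⁻¹ * B + ‖(((n / m : ℕ) * m : ℝ) / n - 1) * c‖ₑ := by
  set r : ℝ := ((n / m : ℕ) * m : ℝ) / n
  have hdev (j : ℕ) : AEStronglyMeasurable (fun ω => G j ω - m * c) μ :=
    (hG j).sub aestronglyMeasurable_const
  calc eLpNorm (fun ω => (n : ℝ)⁻¹ * (∑ j ∈ Icc 1 (n / m), G j ω) - c) ⊤ μ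
      = eLpNorm ((n : ℝ)⁻¹ • (∑ j ∈ Icc 1 (n / m), fun ω => G j ω - m * c)
          + fun _ => (r - 1) * c) ⊤ μ := by
        congr 1
        ext ω
        rcases eq_or_ne n 0 with rfl | hn
        · simp [r]
        · simp only [Pi.add_apply, Pi.smul_apply, Finset.sum_apply, sum_sub_distrib, sum_const,
            Nat.card_Icc, add_tsub_cancel_right, nsmul_eq_mul, smul_eq_mul, r]
          field_simp
          ring
    _ ≤ ‖(n : ℝ)⁻¹‖ₑ * ∑ j ∈ Icc 1 (n / m), eLpNorm (fun ω => G j ω - m * c) ⊤ μ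
          + ‖(r - 1) * c‖ₑ := by
        refine (eLpNorm_add_le ((Finset.aestronglyMeasurable_sum _ fun j _ => hdev j).const_smul _)
          aestronglyMeasurable_const le_top).trans ?_
        rw [eLpNorm_const_smul, eLpNorm_exponent_top]
        gcongr
        · exact eLpNorm_sum_le (fun j _ => hdev j) le_top
        · exact eLpNormEssSup_le_of_ae_enorm_bound (.of_forall fun _ => le_rfl)
    _ ≤ ‖(n : ℝ)⁻¹‖ₑ * ((n / m : ℕ) * B) + ‖(r - 1) * c‖ₑ := by
        gcongr
        calc ∑ j ∈ Icc 1 (n / m), eLpNorm (fun ω => G j ω - m * c) ⊤ μ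
            ≤ ∑ j ∈ Icc 1 (n / m), B := sum_le_sum fun j hj => hB j (mem_Icc.1 hj).1
          _ = (n / m : ℕ) * B := by simp
    _ ≤ (m : ℝ≥0∞)⁻¹ * B + ‖(r - 1) * c‖ₑ := by
        rw [← mul_assoc]
        gcongr
        exact enorm_inv_natCast_mul_natDiv_le n m

theorem limsup_eLpNorm_blockAverage_sub_le (hG : ∀ j, AEStronglyMeasurable (G j) μ)
    (hm : m ≠ 0) (c : ℝ) (hB : ∀ j, 1 ≤ j → eLpNorm (fun ω => G j ω - m * c) ⊤ μ ≤ B) :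
    limsup (fun n : ℕ => eLpNorm (fun ω => (n : ℝ)⁻¹ * (∑ j ∈ Icc 1 (n / m), G j ω) - c) ⊤ μ)
      atTop ≤ (m : ℝ≥0∞)⁻¹ * B := by
  have hdefect : Tendsto (fun n : ℕ => ‖(((n / m : ℕ) * m : ℝ) / n - 1) * c‖ₑ) atTop (𝓝 0) := by
    simpa using (((tendsto_natDiv_mul_div_atTop hm).sub_const 1).mul_const c).enorm
  calc limsup _ atTop
      ≤ limsup (fun n : ℕ => (m : ℝ≥0∞)⁻¹ * B + ‖(((n / m : ℕ) * m : ℝ) / n - 1) * c‖ₑ) atTop :=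
        limsup_le_limsup (.of_forall (eLpNorm_blockAverage_sub_le hG c hB))
    _ = (m : ℝ≥0∞)⁻¹ * B := by simpa using (tendsto_const_nhds.add hdefect).limsup_eq

end BlockAverage

theorem stmt_19_general {Ω : Type*} [m0 : MeasurableSpace Ω] (μ : Measure Ω) [IsProbabilityMeasure μ]
    (T : Ω → Ω) (hT : MeasurePreserving T μ μ)
    (F0 : MeasurableSpace Ω) (hF0m : F0 ≤ m0)
    (F : ℕ → MeasurableSpace Ω) (hF : ∀ k, F k = MeasurableSpace.comap (T^[k]) F0)
    (X0 : Ω → ℝ) (hX0meas : @Measurable Ω ℝ F0 _ X0) (hX0b : eLpNorm X0 ⊤ μ < ⊤)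
    (X : ℕ → Ω → ℝ) (hX : ∀ i, X i = X0 ∘ T^[i])
    (S : ℕ → Ω → ℝ) (hS : ∀ k, S k = fun ω => ∑ j ∈ Finset.Icc 1 k, X j ω)
    (m : ℕ) (hm : 1 ≤ m)
    (Xm : ℕ → Ω → ℝ)
    (hXm : ∀ i, Xm i = fun ω => ∑ j ∈ Finset.Icc ((i - 1) * m + 1) (i * m), X j ω)
    (D : ℕ → Ω → ℝ)
    (hD : ∀ i, D i = fun ω => Xm i ω - (μ[Xm i|F ((i - 1) * m)]) ω)
    (σ2 : ℝ) :
    limsup (fun n : ℕ =>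
        eLpNorm (fun ω => (n : ℝ)⁻¹ *
          (∑ j ∈ Finset.Icc 1 (n / m), (μ[(fun ω' => D j ω' ^ 2)|F ((j - 1) * m)]) ω)
            - σ2) ⊤ μ) atTop ≤
      ((m : ℝ≥0∞))⁻¹ * (eLpNorm (μ[S m|F0]) ⊤ μ) ^ 2 +
        eLpNorm (fun ω => (m : ℝ)⁻¹ * (μ[(fun ω' => S m ω' ^ 2)|F0]) ω - σ2) ⊤ μ := by
  -- `F0` is also a `MeasurableSpace Ω` in context and would otherwise be picked as the instance.
  let _ : MeasurableSpace Ω := m0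
  have hm0 : m ≠ 0 := Nat.one_le_iff_ne_zero.mp hm
  have hTk (k : ℕ) : MeasurePreserving (T^[k]) μ μ := hT.iterate k
  have hSm : MemLp (S m) 2 μ := by
    have hX0 : MemLp X0 ⊤ μ := ⟨(hX0meas.mono hF0m le_rfl).aestronglyMeasurable, hX0b⟩
    rw [hS]
    exact (memLp_finsetSum _ fun j _ => hX j ▸ hX0.comp_measurePreserving (hTk j)).mono_exponent
      le_top
  have hblock (i : ℕ) : Xm (i + 1) = S m ∘ T^[i * m] := by
    ext ω
    rw [hXm, hS, Nat.add_sub_cancel, show (i + 1) * m = m + i * m by ring, add_comm (i * m) 1,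
      ← map_add_right_Icc]
    simp only [Function.comp_apply, sum_map, addRightEmbedding_apply, hX,
      Function.iterate_add_apply]
  have hsummand (i : ℕ) :
      μ[(fun ω => D (i + 1) ω ^ 2) | F (i * m)] =ᵐ[μ] Var[S m; μ | F0] ∘ T^[i * m] := by
    have hD2 : (fun ω => D (i + 1) ω ^ 2) =
        (S m ∘ T^[i * m] - μ[S m ∘ T^[i * m] | F0.comap (T^[i * m])]) ^ 2 := by
      rw [hD, hblock, Nat.add_sub_cancel, hF]
      rfl
    rw [hD2, hF]
    exact condVar_comp_ae_eq (hTk _) hF0m hSm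
  have hterm (j : ℕ) (hj : 1 ≤ j) :
      eLpNorm (fun ω => μ[(fun ω => D j ω ^ 2) | F ((j - 1) * m)] ω - m * σ2) ⊤ μ =
        eLpNorm (fun ω => Var[S m; μ | F0] ω - m * σ2) ⊤ μ := by
    obtain ⟨i, rfl⟩ := Nat.exists_eq_add_of_le' hj
    rw [Nat.add_sub_cancel]
    exact (eLpNorm_congr_ae ((hsummand i).sub EventuallyEq.rfl)).trans
      (eLpNorm_comp_measurePreserving
        (integrable_condVar.aestronglyMeasurable.sub aestronglyMeasurable_const) (hTk (i * m)))
  refine (limsup_eLpNorm_blockAverage_sub_le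
    (G := fun j => μ[(fun ω => D j ω ^ 2) | F ((j - 1) * m)])
    (fun _ => integrable_condExp.aestronglyMeasurable) hm0 σ2
    fun j hj => (hterm j hj).trans_le (eLpNorm_condVar_sub_le hF0m hSm hm0 σ2)).trans_eq ?_
  rw [mul_add, ← mul_assoc, ENNReal.inv_mul_cancel (by exact_mod_cast hm0) (by simp), one_mul]
  rfl

/-- Key step in the proof of Theorem `mainresult` (verification of condition (3)):
for the block sums `X_{i,m}` and block martingale differences `D_{i,m}`,
`limsup_n ‖n⁻¹ ∑_{j ≤ [n/m]} E(D_{j,m}²|F_{(j-1)m}) − σ²‖_∞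
  ≤ m⁻¹ ‖E(S_m|F₀)‖_∞² + ‖m⁻¹ E(S_m²|F₀) − σ²‖_∞`. -/
theorem stmt_19 {Ω : Type*} [m0 : MeasurableSpace Ω] (μ : Measure Ω) [IsProbabilityMeasure μ]
    (T : Ω → Ω) (hTbij : Function.Bijective T) (hT : MeasurePreserving T μ μ)
    (F0 : MeasurableSpace Ω) (hF0m : F0 ≤ m0) (hF0T : F0 ≤ MeasurableSpace.comap T F0)
    (F : ℕ → MeasurableSpace Ω) (hF : ∀ k, F k = MeasurableSpace.comap (T^[k]) F0)
    (X0 : Ω → ℝ) (hX0meas : @Measurable Ω ℝ F0 _ X0) (hX0b : eLpNorm X0 ⊤ μ < ⊤)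
    (X : ℕ → Ω → ℝ) (hX : ∀ i, X i = X0 ∘ T^[i])
    (S : ℕ → Ω → ℝ) (hS : ∀ k, S k = fun ω => ∑ j ∈ Finset.Icc 1 k, X j ω)
    (m : ℕ) (hm : 1 ≤ m)
    (Xm : ℕ → Ω → ℝ)
    (hXm : ∀ i, Xm i = fun ω => ∑ j ∈ Finset.Icc ((i - 1) * m + 1) (i * m), X j ω)
    (D : ℕ → Ω → ℝ)
    (hD : ∀ i, D i = fun ω => Xm i ω - (μ[Xm i|F ((i - 1) * m)]) ω)
    (σ2 : ℝ) (hσ2 : 0 ≤ σ2) :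
    limsup (fun n : ℕ =>
        eLpNorm (fun ω => (n : ℝ)⁻¹ *
          (∑ j ∈ Finset.Icc 1 (n / m), (μ[(fun ω' => D j ω' ^ 2)|F ((j - 1) * m)]) ω)
            - σ2) ⊤ μ) atTop ≤
      ((m : ℝ≥0∞))⁻¹ * (eLpNorm (μ[S m|F0]) ⊤ μ) ^ 2 +
        eLpNorm (fun ω => (m : ℝ)⁻¹ * (μ[(fun ω' => S m ω' ^ 2)|F0]) ω - σ2) ⊤ μ :=
  stmt_19_general (m0 := m0) μ T hT F0 hF0m F hF X0 hX0meas hX0b X hX S hS m hm Xm hXm D hD σ2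
end
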